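/- arXiv:1711.04900 — 5 statements merged into one kernel-verified Lean document; each statement's English description precedes it below -/
import Mathlib

section
/- Fix k ≥ 2 and n ≥ 1, and let p_k = 2^k/(k+1). There exist τ > 0 and C = C(k,n) < ∞ such that for all measurable sets E_α ⊂ ℝⁿ of finite measure (α ∈ {0,1}^k), T_k(1_{E_α} : α ∈ {0,1}^k) ≤ C · ρ(λ(E_α) : α)^τ · ∏_α (λ(E_α))^{1/p_k}, where ρ(c_α : α) = min over pairs β ≠ γ of c_β/c_γ. -/
/-!
Fix a vertex `β` of the cube and `k` further vertices `γ l` for which `(x, h) ↦ (x + β • h,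
(x + γ l • h)_l)` is a linear automorphism of `ℝⁿ × (ℝⁿ)ᵏ`. Dropping all other factors of the
integrand and changing variables gives `T ≤ C λ(E_β) ∏_l λ(E_{γ l})`. Taking as frame the star of
each vertex (the vertex and its `k` neighbours) and multiplying the `2^k` bounds gives the endpoint
estimate `T^{2^k} ≤ C^{2^k} ∏_α λ(E_α)^{k+1}`. If `v` and `u` agree in some direction `i`, the
star of `β = u` flipped at `i` may be replaced by the frame in which the neighbour `u` is swapped
for `v`, which trades one factor `λ(E_u)` for `λ(E_v)`. For `k ≥ 2` any two vertices are joined by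
two such swaps, so `λ(E_u) T^{2^{k+1}} ≤ C' λ(E_v) ∏_α λ(E_α)^{2(k+1)}`; choosing `(v, u)` to
realise `ρ` yields the gain `ρ^{2^{-(k+1)}}`.
-/

open MeasureTheory Finset
open scoped ENNReal

lemma ite_sub_ite_eq_zero_iff {G : Type*} [AddGroup G] {a b : Bool} (hab : a ≠ b) (x : G) :
    ((if a then x else 0) - if b then x else 0) = 0 ↔ x = 0 := by
  cases a <;> cases b <;> simp_all

lemma mul_prod_update_eq_mul_prod {κ M : Type*} [Fintype κ] [DecidableEq κ] [CommMonoid M]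
    (f : κ → M) (a : κ) {b c d : M} (h : c * b = d * f a) :
    c * ∏ x, Function.update f a b x = d * ∏ x, f x := by
  rw [prod_update_of_mem (mem_univ a), ← mul_assoc, h, mul_assoc, sdiff_singleton_eq_erase,
    mul_prod_erase _ _ (mem_univ a)]

lemma pow_card_le_mul_prod {κ M : Type*} [Fintype κ] [CommMonoid M] [Preorder M] [MulLeftMono M]
    {T K : M} {R : κ → M}
    (h : ∀ x, T ≤ K * R x) : T ^ Fintype.card κ ≤ K ^ Fintype.card κ * ∏ x, R x := by
  calc T ^ Fintype.card κ = ∏ _x : κ, T := by rw [prod_const, card_univ]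
    _ ≤ ∏ x, K * R x := prod_le_prod' fun x _ => h x
    _ = _ := by rw [prod_mul_distrib, prod_const, card_univ]

lemma ENNReal.le_mul_rpow_of_mul_pow_le {a b T K P : ℝ≥0∞} {N M : ℕ} (hN : N ≠ 0) (ha : a ≠ 0)
    (ha' : a ≠ ∞) (h : a * T ^ N ≤ K ^ N * (b * P ^ M)) :
    T ≤ K * ((b / a) ^ (N⁻¹ : ℝ) * P ^ ((M : ℝ) / N)) := by
  have hN' : (N : ℝ) ≠ 0 := Nat.cast_ne_zero.mpr hN
  have h_ratio : ((b / a) ^ (N⁻¹ : ℝ)) ^ N = b / a := by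
    rw [← ENNReal.rpow_natCast, ← ENNReal.rpow_mul, inv_mul_cancel₀ hN', ENNReal.rpow_one]
  have h_prod : (P ^ ((M : ℝ) / N)) ^ N = P ^ M := by
    rw [← ENNReal.rpow_natCast, ← ENNReal.rpow_mul, div_mul_cancel₀ _ hN', ENNReal.rpow_natCast]
  rw [← ENNReal.pow_le_pow_left_iff hN, mul_pow, mul_pow, h_ratio, h_prod]
  calc T ^ N ≤ K ^ N * (b * P ^ M) / a :=
        (ENNReal.le_div_iff_mul_le (.inl ha) (.inl ha')).mpr (by rwa [mul_comm])
    _ = K ^ N * (b / a * P ^ M) := by simp only [div_eq_mul_inv]; ring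

lemma exists_le_iInf_ne {κ α : Type*} [Finite κ] [Nontrivial κ] [CompleteLinearOrder α]
    (f : κ → κ → α) : ∃ a b, f a b ≤ ⨅ (a) (b) (_ : a ≠ b), f a b := by
  obtain ⟨⟨a, b⟩, -, hmin⟩ := Set.exists_min_image {p : κ × κ | p.1 ≠ p.2} (fun p => f p.1 p.2)
    (Set.toFinite _) (let ⟨a, b, h⟩ := exists_pair_ne κ; ⟨(a, b), h⟩)
  exact ⟨a, b, le_iInf₂ fun a' b' => le_iInf fun h => hmin (a', b') h⟩

namespace GowersInnerProduct

section Cube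

variable {ι : Type*} [DecidableEq ι]

def flipCoord (α : ι → Bool) (l : ι) : ι → Bool := Function.update α l (!α l)

@[simp] lemma flipCoord_self (α : ι → Bool) (l : ι) : flipCoord α l l = !α l :=
  Function.update_self _ _ _

lemma flipCoord_of_ne (α : ι → Bool) {l m : ι} (h : m ≠ l) : flipCoord α l m = α m :=
  Function.update_of_ne h _ _

lemma flipCoord_ne (α : ι → Bool) (l : ι) : flipCoord α l ≠ α :=
  fun h => by simpa using congrFun h l

lemma flipCoord_involutive (l : ι) : Function.Involutive (flipCoord · l) := by
  intro α
  funext m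
  by_cases h : m = l
  · subst h; simp
  · simp [flipCoord_of_ne _ h]

def frame (β v : ι → Bool) (i : ι) : ι → ι → Bool := Function.update (flipCoord β) i v

lemma frame_flipCoord (β : ι → Bool) (i : ι) : frame β (flipCoord β i) i = flipCoord β :=
  Function.update_eq_self _ _

lemma frame_ne {β v : ι → Bool} {i : ι} (hvi : v i ≠ β i) (l : ι) : frame β v i l ≠ β := by
  by_cases hl : l = i
  · subst hl; simpa [frame] using fun h => hvi (congrFun h l)
  · simpa [frame, hl] using flipCoord_ne β l

lemma frame_injective {β v : ι → Bool} {i : ι} (hvi : v i ≠ β i) :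
    Function.Injective (frame β v i) := by
  have flip_ne_v : ∀ l ≠ i, flipCoord β l ≠ v := fun l hl h =>
    hvi (by rw [← h, flipCoord_of_ne β (Ne.symm hl)])
  intro l₁ l₂ h
  by_cases h₁ : l₁ = i <;> by_cases h₂ : l₂ = i
  · rw [h₁, h₂]
  · simp only [frame, h₁, Function.update_self, Function.update_of_ne h₂] at h
    exact (flip_ne_v l₂ h₂ h.symm).elim
  · simp only [frame, h₂, Function.update_self, Function.update_of_ne h₁] at h
    exact (flip_ne_v l₁ h₁ h).elim
  · by_contra hne
    have := congrFun h l₁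
    simp [frame, h₁, h₂, flipCoord_of_ne β hne] at this

end Cube

section Vertex

variable {ι V : Type*} [Fintype ι] [AddCommGroup V] [Module ℝ V]

def vertex (α : ι → Bool) : V × (ι → V) →ₗ[ℝ] V where
  toFun z := z.1 + ∑ i, if α i then z.2 i else 0
  map_add' z w := by
    simp only [Prod.fst_add, Prod.snd_add, Pi.add_apply, ite_add_zero, sum_add_distrib]
    abel
  map_smul' c z := by
    simp [smul_add, smul_sum, smul_ite]

lemma vertex_apply (α : ι → Bool) (z : V × (ι → V)) :
    vertex α z = z.1 + ∑ i, if α i then z.2 i else 0 := rfl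

lemma vertex_sub_vertex_of_eq_or_eq_zero {α β : ι → Bool} {i : ι} {z : V × (ι → V)}
    (h : ∀ m ≠ i, α m = β m ∨ z.2 m = 0) :
    vertex α z - vertex β z = (if α i then z.2 i else 0) - if β i then z.2 i else 0 := by
  rw [vertex_apply, vertex_apply, add_sub_add_left_eq_sub, ← sum_sub_distrib,
    sum_eq_single i (fun m _ hm => by rcases h m hm with h | h <;> simp [h]) (by simp)]

def frameMap (β : ι → Bool) (γ : ι → ι → Bool) : V × (ι → V) →ₗ[ℝ] V × (ι → V) :=
  (vertex β).prod (LinearMap.pi fun l => vertex (γ l))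

lemma frameMap_frame_injective [DecidableEq ι] {β v : ι → Bool} {i : ι} (hvi : v i ≠ β i) :
    Function.Injective (frameMap (V := V) β (frame β v i)) := by
  rw [← LinearMap.ker_eq_bot, LinearMap.ker_eq_bot']
  intro z hz
  have hβ : vertex β z = 0 := congrArg Prod.fst hz
  have hγ : ∀ l, vertex (frame β v i l) z = 0 := fun l => congrFun (congrArg Prod.snd hz) l
  have h_ne : ∀ l ≠ i, z.2 l = 0 := by
    intro l hl
    have := hγ l
    simp only [frame, Function.update_of_ne hl] at this
    rw [← ite_sub_ite_eq_zero_iff (by simp : flipCoord β l l ≠ β l),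
      ← vertex_sub_vertex_of_eq_or_eq_zero fun m hm => .inl (flipCoord_of_ne β hm), this, hβ,
      sub_zero]
  have h_i : z.2 i = 0 := by
    have := hγ i
    simp only [frame, Function.update_self] at this
    rw [← ite_sub_ite_eq_zero_iff hvi,
      ← vertex_sub_vertex_of_eq_or_eq_zero fun m hm => .inr (h_ne m hm), this, hβ, sub_zero]
  have h₂ : z.2 = 0 := funext fun l => if hl : l = i then hl ▸ h_i else h_ne l hl
  refine Prod.ext ?_ h₂
  simpa [vertex_apply, h₂] using hβ

end Vertex

section Measure

variable {ι V : Type*} [Fintype ι] [DecidableEq ι] [NormedAddCommGroup V] [NormedSpace ℝ V]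
  [FiniteDimensional ℝ V] [MeasurableSpace V] [BorelSpace V]

/-- `T_k(1_{E_α} : α)`, computed with respect to `μ`. -/
noncomputable def gowersIndicator (μ : Measure V) (E : (ι → Bool) → Set V) : ℝ≥0∞ :=
  ∫⁻ z, ∏ α, (E α).indicator 1 (vertex α z) ∂μ.prod (Measure.pi fun _ => μ)

variable (μ : Measure V) [μ.IsAddHaarMeasure]

/-- Drop all factors but those of the frame, then change variables along `frameMap`. -/
lemma gowersIndicator_le_of_frameMap {E : (ι → Bool) → Set V}
    (hE : ∀ α, MeasurableSet (E α)) {β : ι → Bool} {γ : ι → ι → Bool}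
    (hγ : Function.Injective γ) (hβ : ∀ l, γ l ≠ β)
    (hdet : LinearMap.det (frameMap (V := V) β γ) ≠ 0) :
    gowersIndicator μ E ≤ ENNReal.ofReal |(LinearMap.det (frameMap (V := V) β γ))⁻¹| *
      (μ (E β) * ∏ l, μ (E (γ l))) := by
  set P : Set (V × (ι → V)) := E β ×ˢ Set.univ.pi fun l => E (γ l)
  have hP : MeasurableSet P := (hE β).prod (.univ_pi fun l => hE (γ l))
  have h_pointwise : ∀ z, ∏ α, (E α).indicator (1 : V → ℝ≥0∞) (vertex α z) ≤
      P.indicator 1 (frameMap β γ z) := by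
    intro z
    have hβ_notMem : β ∉ univ.image γ := by simpa using hβ
    calc ∏ α, (E α).indicator 1 (vertex α z)
        ≤ ∏ α ∈ insert β (univ.image γ), (E α).indicator (1 : V → ℝ≥0∞) (vertex α z) :=
          prod_le_prod_of_subset_of_le_one' (subset_univ _)
            fun α _ _ => Set.indicator_apply_le' (fun _ => le_rfl) fun _ => zero_le_one
      _ = P.indicator 1 (frameMap β γ z) := by
          rw [prod_insert hβ_notMem, prod_image fun _ _ _ _ h => hγ h]
          simp [P, frameMap, Set.indicator_prod_one, ← coe_univ, Set.indicator_pi_one_apply]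
  calc gowersIndicator μ E
      ≤ ∫⁻ z, (frameMap β γ ⁻¹' P).indicator 1 z ∂μ.prod (Measure.pi fun _ => μ) :=
        lintegral_mono h_pointwise
    _ = (μ.prod (Measure.pi fun _ => μ)) (frameMap β γ ⁻¹' P) :=
        lintegral_indicator_one <|
          hP.preimage (LinearMap.continuous_of_finiteDimensional _).measurable
    _ = _ := by
        have := Measure.pi.isAddHaarMeasure fun _ : ι => μ
        rw [Measure.addHaar_preimage_linearMap _ hdet, Measure.prod_prod, Measure.pi_pi]

end Measure

section FrameConstant

variable (ι V : Type*) [Fintype ι] [DecidableEq ι] [NormedAddCommGroup V] [NormedSpace ℝ V]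

noncomputable def frameConst : ℝ :=
  1 + ∑ t : (ι → Bool) × (ι → Bool) × ι,
    |(LinearMap.det (frameMap (V := V) t.1 (frame t.1 t.2.1 t.2.2)))⁻¹|

lemma one_le_frameConst : 1 ≤ frameConst ι V :=
  le_add_of_nonneg_right (sum_nonneg fun _ _ => abs_nonneg _)

variable {ι V}

lemma abs_det_frameMap_inv_le_frameConst (β v : ι → Bool) (i : ι) :
    |(LinearMap.det (frameMap (V := V) β (frame β v i)))⁻¹| ≤ frameConst ι V :=
  (single_le_sum (f := fun t : (ι → Bool) × (ι → Bool) × ι =>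
      |(LinearMap.det (frameMap (V := V) t.1 (frame t.1 t.2.1 t.2.2)))⁻¹|)
    (fun _ _ => abs_nonneg _) (mem_univ (β, v, i))).trans (le_add_of_nonneg_left zero_le_one)

end FrameConstant

section FrameBound

variable {ι V : Type*} [Fintype ι] [DecidableEq ι] [NormedAddCommGroup V] [NormedSpace ℝ V]
  [FiniteDimensional ℝ V] [MeasurableSpace V] [BorelSpace V] (μ : Measure V) [μ.IsAddHaarMeasure]

lemma gowersIndicator_le_frame {E : (ι → Bool) → Set V} (hE : ∀ α, MeasurableSet (E α))
    {β v : ι → Bool} {i : ι} (hvi : v i ≠ β i) :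
    gowersIndicator μ E ≤
      ENNReal.ofReal (frameConst ι V) * (μ (E β) * ∏ l, μ (E (frame β v i l))) := by
  have hdet : LinearMap.det (frameMap (V := V) β (frame β v i)) ≠ 0 :=
    have hinj := frameMap_frame_injective (V := V) hvi
    (LinearMap.isUnit_det _ <| (Module.End.isUnit_iff _).mpr
      ⟨hinj, LinearMap.injective_iff_surjective.mp hinj⟩).ne_zero
  refine (gowersIndicator_le_of_frameMap μ hE (frame_injective hvi) (frame_ne hvi) hdet).trans ?_
  gcongr
  exact abs_det_frameMap_inv_le_frameConst β v i

end FrameBound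

section CubeProducts

variable {ι : Type*} [Fintype ι] [DecidableEq ι]

noncomputable def starProd (c : (ι → Bool) → ℝ≥0∞) (α : ι → Bool) : ℝ≥0∞ :=
  c α * ∏ l, c (flipCoord α l)

lemma prod_starProd (c : (ι → Bool) → ℝ≥0∞) :
    ∏ α, starProd c α = (∏ α, c α) ^ (Fintype.card ι + 1) := by
  have h_flip : ∀ l, ∏ α, c (flipCoord α l) = ∏ α, c α := fun l =>
    Equiv.prod_comp (flipCoord_involutive l).toPerm c
  simp only [starProd, prod_mul_distrib]
  rw [prod_comm, prod_congr rfl fun l _ => h_flip l, prod_const, card_univ, pow_succ']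

variable {c : (ι → Bool) → ℝ≥0∞} {T K : ℝ≥0∞}

lemma le_starProd_of_le_frame [Nonempty ι]
    (hframe : ∀ β v i, v i ≠ β i → T ≤ K * (c β * ∏ l, c (frame β v i l))) (α : ι → Bool) :
    T ≤ K * starProd c α := by
  obtain ⟨i⟩ := ‹Nonempty ι›
  simpa [frame_flipCoord, starProd] using hframe α (flipCoord α i) i (by simp)

/-- When `v` and `u` agree in direction `i`, the frame at `β = flipCoord u i` with `v` in place of
its `i`-th neighbour `u` replaces `c u` by `c v` in the product of all the star bounds. -/
lemma mul_pow_le_of_le_frame {v u : ι → Bool} {i : ι} (hvu : v i = u i)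
    (hframe : ∀ β v i, v i ≠ β i → T ≤ K * (c β * ∏ l, c (frame β v i l))) :
    c u * T ^ 2 ^ Fintype.card ι ≤
      K ^ 2 ^ Fintype.card ι * (c v * (∏ α, c α) ^ (Fintype.card ι + 1)) := by
  have : Nonempty ι := ⟨i⟩
  set β := flipCoord u i
  set Q := c β * ∏ l, c (frame β v i l)
  have hQ : c u * Q = c v * starProd c β := by
    have hu : flipCoord β i = u := flipCoord_involutive i u
    have := mul_prod_update_eq_mul_prod (fun l => c (flipCoord β l)) i
      (b := c v) (c := c u) (d := c v) (by rw [hu, mul_comm])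
    simp only [Q, starProd, frame, Function.apply_update (fun _ => c)] at this ⊢
    rw [mul_left_comm, this, mul_left_comm]
  have hT := pow_card_le_mul_prod (T := T) (K := K) (R := Function.update (starProd c) β Q)
    fun α => by
      rcases eq_or_ne α β with rfl | hα
      · simpa using hframe β v i (by simp [β, hvu])
      · simpa [hα] using le_starProd_of_le_frame hframe α
  rw [Fintype.card_fun, Fintype.card_bool] at hT
  calc c u * T ^ 2 ^ Fintype.card ι
      ≤ c u * (K ^ 2 ^ Fintype.card ι * ∏ α, Function.update (starProd c) β Q α) := by gcongr
    _ = K ^ 2 ^ Fintype.card ι * (c v * ∏ α, starProd c α) := by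
        rw [mul_left_comm, mul_prod_update_eq_mul_prod _ _ hQ]
    _ = _ := by rw [prod_starProd]

/-- Chain `mul_pow_le_of_le_frame` through a vertex `w` that agrees with `v` in one direction and
with `u` in another. -/
lemma mul_pow_le_of_le_frame_of_nontrivial [Nontrivial ι] (hc : ∀ α, c α ≠ ∞)
    (hframe : ∀ β v i, v i ≠ β i → T ≤ K * (c β * ∏ l, c (frame β v i l))) (v u : ι → Bool) :
    c u * T ^ (2 * 2 ^ Fintype.card ι) ≤
      K ^ (2 * 2 ^ Fintype.card ι) * (c v * (∏ α, c α) ^ (2 * (Fintype.card ι + 1))) := by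
  obtain ⟨j₀, j₁, hj⟩ := exists_pair_ne ι
  set w := Function.update v j₀ (u j₀)
  have hvw := mul_pow_le_of_le_frame (u := w) (Function.update_of_ne hj.symm _ _).symm hframe
  have hwu := mul_pow_le_of_le_frame (v := w) (u := u) (Function.update_self j₀ _ _) hframe
  rcases eq_or_ne (c w) 0 with hw | hw
  · have hT : T = 0 := by simpa [starProd, hw] using le_starProd_of_le_frame hframe w
    simp [hT]
  rw [← ENNReal.mul_le_mul_iff_right hw (hc w)]
  calc c w * (c u * T ^ (2 * 2 ^ Fintype.card ι))
      = (c w * T ^ 2 ^ Fintype.card ι) * (c u * T ^ 2 ^ Fintype.card ι) := by ring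
    _ ≤ (K ^ 2 ^ Fintype.card ι * (c v * (∏ α, c α) ^ (Fintype.card ι + 1))) *
        (K ^ 2 ^ Fintype.card ι * (c w * (∏ α, c α) ^ (Fintype.card ι + 1))) := by gcongr
    _ = c w * (K ^ (2 * 2 ^ Fintype.card ι) * (c v * (∏ α, c α) ^ (2 * (Fintype.card ι + 1)))) := by
        ring

end CubeProducts

end GowersInnerProduct

open GowersInnerProduct in
theorem gowers_inner_product_indicator_gain_general (k n : ℕ) (hk : 2 ≤ k) :
    ∃ τ C : ℝ, 0 < τ ∧ 0 < C ∧
      ∀ E : (Fin k → Bool) → Set (EuclideanSpace ℝ (Fin n)),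
        (∀ α, MeasurableSet (E α)) → (∀ α, volume (E α) < ∞) →
        (∫⁻ z : EuclideanSpace ℝ (Fin n) × (Fin k → EuclideanSpace ℝ (Fin n)),
            ∏ α : Fin k → Bool,
              (E α).indicator (fun _ => (1 : ℝ≥0∞)) (z.1 + ∑ i, if α i then z.2 i else 0)) ≤
          ENNReal.ofReal C *
            (⨅ (β : Fin k → Bool) (γ : Fin k → Bool) (_ : β ≠ γ),
              volume (E β) / volume (E γ)) ^ τ *
            ∏ α : Fin k → Bool, (volume (E α)) ^ (((k : ℝ) + 1) / (2 : ℝ) ^ k) := by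
  have : Nontrivial (Fin k) := Fin.nontrivial_iff_two_le.mpr hk
  refine ⟨(2 ^ (k + 1) : ℝ)⁻¹, frameConst (Fin k) (EuclideanSpace ℝ (Fin n)), by positivity,
    one_pos.trans_le (one_le_frameConst _ _), fun E hE hfin => ?_⟩
  change gowersIndicator volume E ≤ _
  have hframe := fun (β v : Fin k → Bool) (i : Fin k) (hvi : v i ≠ β i) =>
    gowersIndicator_le_frame volume hE hvi
  obtain ⟨v, u, hvu⟩ := exists_le_iInf_ne fun β γ => volume (E β) / volume (E γ)
  rcases eq_or_ne (volume (E u)) 0 with hu | hu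
  · have hT := le_starProd_of_le_frame hframe u
    simp only [starProd, hu, zero_mul, mul_zero, nonpos_iff_eq_zero] at hT
    simp [hT]
  have key := ENNReal.le_mul_rpow_of_mul_pow_le (by positivity) hu (hfin u).ne
    (mul_pow_le_of_le_frame_of_nontrivial (fun α => (hfin α).ne) hframe v u)
  have hτ : (((2 * 2 ^ Fintype.card (Fin k) : ℕ) : ℝ))⁻¹ = (2 ^ (k + 1) : ℝ)⁻¹ := by
    simp [pow_succ, mul_comm]
  have he : ((2 * (Fintype.card (Fin k) + 1) : ℕ) : ℝ) / ((2 * 2 ^ Fintype.card (Fin k) : ℕ) : ℝ)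
      = ((k : ℝ) + 1) / 2 ^ k := by
    push_cast [Fintype.card_fin]
    field_simp
  rw [hτ, he, ← ENNReal.prod_rpow_of_nonneg (by positivity)] at key
  rw [mul_assoc]
  exact key.trans (by gcongr)

/-- Fix `k ≥ 2`, `n ≥ 1`, `p_k = 2^k/(k+1)`. There exist `τ > 0` and
`C < ∞` such that for all measurable sets `E_α ⊆ ℝⁿ` of finite measure,
`T_k(1_{E_α}) ≤ C ρ^τ ∏_α λ(E_α)^{1/p_k}`, where
`ρ = min_{β ≠ γ} λ(E_β)/λ(E_γ)`. -/
theorem gowers_inner_product_indicator_gain (k n : ℕ) (hk : 2 ≤ k) (hn : 1 ≤ n) :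
    ∃ τ C : ℝ, 0 < τ ∧ 0 < C ∧
      ∀ E : (Fin k → Bool) → Set (EuclideanSpace ℝ (Fin n)),
        (∀ α, MeasurableSet (E α)) → (∀ α, volume (E α) < ∞) →
        (∫⁻ z : EuclideanSpace ℝ (Fin n) × (Fin k → EuclideanSpace ℝ (Fin n)),
            ∏ α : Fin k → Bool,
              (E α).indicator (fun _ => (1 : ℝ≥0∞)) (z.1 + ∑ i, if α i then z.2 i else 0)) ≤
          ENNReal.ofReal C *
            (⨅ (β : Fin k → Bool) (γ : Fin k → Bool) (_ : β ≠ γ),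
              volume (E β) / volume (E γ)) ^ τ *
            ∏ α : Fin k → Bool, (volume (E α)) ^ (((k : ℝ) + 1) / (2 : ℝ) ^ k) :=
  gowers_inner_product_indicator_gain_general k n hk
end

section
/- Let n ≥ 1, let Θ : ℝ_{>0} → ℝ_{>0} be a growth function (Θ(ρ) → 0 as ρ → ∞), and let p ∈ [1,∞). Suppose {fᵢ} is a sequence of nonnegative functions on ℝⁿ with ‖fᵢ‖_p = 1, each fᵢ radially symmetric nonincreasing, and each normalized with respect to Θ, i.e. ∫_{fᵢ > ρ} fᵢ^p ≤ Θ(ρ) and ∫_{fᵢ < ρ} fᵢ^p ≤ Θ(ρ^{-1}) for all ρ > 0. Then for every ε > 0 there exist r, R > 0 such that, for all i, ∫_{|x| ≤ r} fᵢ^p dx ≤ ε and ∫_{|x| ≥ R} fᵢ^p dx ≤ ε. -/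
/-!
Fix `M` with `Θ M ≤ ε / 2`. Near the origin, `f^p` is controlled on `{M < f}` by the
normalization, and by `M^p` times the volume of a small ball elsewhere. Far from the origin,
a radially nonincreasing `f` with `‖f‖_p = 1` must be below `M⁻¹` outside any ball of volume
`> M^p`, since otherwise `f ≥ M⁻¹` on the whole ball; the lower normalization then bounds the
tail by `Θ M`.
-/

open MeasureTheory Filter Metric Module Topology

section SetIntegral

variable {α : Type*} [MeasurableSpace α] {μ : Measure α}

theorem setIntegral_le_setIntegral_add_mul_measureReal {g : α → ℝ} {s t : Set α} {C : ℝ}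
    (hg : Integrable g μ) (hg0 : ∀ x, 0 ≤ g x) (ht : MeasurableSet t) (hs : μ s ≠ ⊤)
    (hC : ∀ x ∈ s \ t, g x ≤ C) (hC0 : 0 ≤ C) :
    ∫ x in s, g x ∂μ ≤ ∫ x in t, g x ∂μ + C * μ.real s := by
  rw [← integral_inter_add_sdiff ht hg.integrableOn]
  gcongr ?_ + ?_
  · exact setIntegral_mono_set hg.integrableOn (ae_of_all _ hg0)
      Set.inter_subset_right.eventuallyLE
  · calc ∫ x in s \ t, g x ∂μ ≤ C * μ.real (s \ t) :=
          (Real.le_norm_self _).trans <| norm_setIntegral_le_of_norm_le_const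
            (measure_lt_top_of_subset Set.sdiff_subset hs)
            fun x hx => by simpa [Real.norm_eq_abs, abs_of_nonneg (hg0 x)] using hC x hx
      _ ≤ C * μ.real s := by gcongr; exact Set.sdiff_subset

end SetIntegral

section Radial

variable {E : Type*} [NormedAddCommGroup E] [MeasurableSpace E] [OpensMeasurableSpace E]
  [ProperSpace E] {μ : Measure E} [IsFiniteMeasureOnCompacts μ]

theorem setIntegral_rpow_norm_ge_le_setIntegral_lt {f : E → ℝ} {p ρ R : ℝ}
    (hp : 0 ≤ p) (hρ : 0 ≤ ρ) (hf0 : ∀ x, 0 ≤ f x) (hanti : ∀ x y, ‖x‖ ≤ ‖y‖ → f y ≤ f x)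
    (hint : Integrable (fun x => f x ^ p) μ)
    (hR : ∫ x, f x ^ p ∂μ < ρ ^ p * μ.real (closedBall 0 R)) :
    ∫ x in {x | R ≤ ‖x‖}, f x ^ p ∂μ ≤ ∫ x in {x | f x < ρ}, f x ^ p ∂μ := by
  have hfp : ∀ x, 0 ≤ f x ^ p := fun x => Real.rpow_nonneg (hf0 x) p
  have htail : {x | R ≤ ‖x‖} ⊆ {x | f x < ρ} := by
    intro x (hx : R ≤ ‖x‖)
    show f x < ρ
    by_contra! hfx
    have hball : ∀ y ∈ closedBall (0 : E) R, ρ ^ p ≤ f y ^ p := fun y hy =>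
      Real.rpow_le_rpow hρ (hfx.trans (hanti y x ((mem_closedBall_zero_iff.1 hy).trans hx))) hp
    refine hR.not_ge ?_
    calc ρ ^ p * μ.real (closedBall 0 R) ≤ ∫ y in closedBall 0 R, f y ^ p ∂μ :=
          setIntegral_ge_of_const_le_real measurableSet_closedBall measure_closedBall_lt_top.ne
            hball hint.integrableOn
      _ ≤ ∫ y, f y ^ p ∂μ := setIntegral_le_integral hint (ae_of_all _ hfp)
  exact setIntegral_mono_set hint.integrableOn (ae_of_all _ hfp) htail.eventuallyLE

end Radial

section AddHaar

variable {E : Type*} [NormedAddCommGroup E] [NormedSpace ℝ E] [FiniteDimensional ℝ E]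
  [MeasurableSpace E] [BorelSpace E] (μ : Measure E) [μ.IsAddHaarMeasure]

theorem exists_pos_measureReal_closedBall_lt (hE : 0 < finrank ℝ E) {δ : ℝ} (hδ : 0 < δ) :
    ∃ r > 0, μ.real (closedBall (0 : E) r) < δ := by
  have hlim : Tendsto (fun r : ℝ => r ^ finrank ℝ E * μ.real (ball (0 : E) 1)) (𝓝[>] 0) (𝓝 0) :=
    (((continuous_pow _).mul continuous_const).tendsto' 0 0 (by simp [hE.ne'])).mono_left
      nhdsWithin_le_nhds
  obtain ⟨r, hr, hr0⟩ := ((hlim.eventually (gt_mem_nhds hδ)).and self_mem_nhdsWithin).exists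
  exact ⟨r, hr0, by rwa [Measure.addHaar_real_closedBall μ 0 (le_of_lt hr0)]⟩

theorem exists_pos_lt_measureReal_closedBall (hE : 0 < finrank ℝ E) (M : ℝ) :
    ∃ R > 0, M < μ.real (closedBall (0 : E) R) := by
  have hball : 0 < μ.real (ball (0 : E) 1) :=
    ENNReal.toReal_pos (measure_ball_pos μ 0 one_pos).ne' measure_ball_lt_top.ne
  have hlim : Tendsto (fun R : ℝ => R ^ finrank ℝ E * μ.real (ball (0 : E) 1)) atTop atTop :=
    (tendsto_pow_atTop hE.ne').atTop_mul_const hball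
  obtain ⟨R, hMR, hR⟩ := ((hlim.eventually_gt_atTop M).and (eventually_gt_atTop 0)).exists
  exact ⟨R, hR, by rwa [Measure.addHaar_real_closedBall μ 0 hR.le]⟩

end AddHaar

theorem uniform_tightness_of_normalized_rearrangements_general (n : ℕ) (hn : 1 ≤ n) (p : ℝ)
    (hp : 1 ≤ p) (Θ : ℝ → ℝ)
    (hΘ : Tendsto Θ atTop (nhds 0))
    (f : ℕ → EuclideanSpace ℝ (Fin n) → ℝ)
    (hmeas : ∀ i, Measurable (f i)) (hnonneg : ∀ i x, 0 ≤ f i x)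
    (hradial : ∀ i (x y : EuclideanSpace ℝ (Fin n)), ‖x‖ ≤ ‖y‖ → f i y ≤ f i x)
    (hnorm : ∀ i, (∫ x, f i x ^ p) = 1)
    (hupper : ∀ i ρ, 0 < ρ → (∫ x in {x | ρ < f i x}, f i x ^ p) ≤ Θ ρ)
    (hlower : ∀ i ρ, 0 < ρ → (∫ x in {x | f i x < ρ}, f i x ^ p) ≤ Θ ρ⁻¹) :
    ∀ ε > (0 : ℝ), ∃ r R : ℝ, 0 < r ∧ 0 < R ∧ ∀ i,
      (∫ x in {x : EuclideanSpace ℝ (Fin n) | ‖x‖ ≤ r}, f i x ^ p) ≤ ε ∧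
      (∫ x in {x : EuclideanSpace ℝ (Fin n) | R ≤ ‖x‖}, f i x ^ p) ≤ ε := by
  intro ε hε
  have hdim : 0 < finrank ℝ (EuclideanSpace ℝ (Fin n)) := by
    rw [finrank_euclideanSpace_fin]; exact hn
  have hp0 : 0 ≤ p := by linarith
  have hint i : Integrable (fun x => f i x ^ p) := .of_integral_ne_zero (by simp [hnorm i])
  obtain ⟨M, hM, hMΘ⟩ : ∃ M > 0, Θ M ≤ ε / 2 :=
    ((eventually_gt_atTop 0).and (hΘ.eventually (ge_mem_nhds (half_pos hε)))).exists
  have hMp : 0 < M ^ p := Real.rpow_pos_of_pos hM p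
  obtain ⟨r, hr, hvol_r⟩ := exists_pos_measureReal_closedBall_lt volume hdim
    (div_pos (half_pos hε) hMp)
  obtain ⟨R, hR, hvol_R⟩ := exists_pos_lt_measureReal_closedBall volume hdim (M ^ p)
  refine ⟨r, R, hr, hR, fun i => ⟨?_, ?_⟩⟩
  · have hball : {x : EuclideanSpace ℝ (Fin n) | ‖x‖ ≤ r} = closedBall 0 r := by ext; simp
    calc ∫ x in {x | ‖x‖ ≤ r}, f i x ^ p
        ≤ (∫ x in {x | M < f i x}, f i x ^ p) +
            M ^ p * volume.real (closedBall (0 : EuclideanSpace ℝ (Fin n)) r) := by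
          rw [hball]
          exact setIntegral_le_setIntegral_add_mul_measureReal (hint i)
            (fun x => Real.rpow_nonneg (hnonneg i x) p)
            (measurableSet_lt measurable_const (hmeas i)) measure_closedBall_lt_top.ne
            (fun x hx => Real.rpow_le_rpow (hnonneg i x) (not_lt.1 hx.2) hp0) hMp.le
      _ ≤ ε / 2 + ε / 2 := by
          gcongr
          exacts [(hupper i M hM).trans hMΘ, ((lt_div_iff₀' hMp).1 hvol_r).le]
      _ = ε := add_halves ε
  · calc ∫ x in {x | R ≤ ‖x‖}, f i x ^ p ≤ ∫ x in {x | f i x < M⁻¹}, f i x ^ p :=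
          setIntegral_rpow_norm_ge_le_setIntegral_lt hp0 (inv_nonneg.2 hM.le) (hnonneg i)
            (hradial i) (hint i)
            (by rwa [hnorm i, Real.inv_rpow hM.le, ← div_eq_inv_mul, one_lt_div hMp])
      _ ≤ Θ M⁻¹⁻¹ := hlower i M⁻¹ (inv_pos.2 hM)
      _ ≤ ε := by rw [inv_inv]; linarith

/-- If `{fᵢ}` is a sequence of nonnegative radially symmetric nonincreasing
functions on `ℝⁿ` with `‖fᵢ‖_p = 1`, each normalized with respect to a growth function `Θ`,
then for every `ε > 0` there are `r, R > 0` with `∫_{|x| ≤ r} fᵢ^p ≤ ε` and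
`∫_{|x| ≥ R} fᵢ^p ≤ ε` for all `i`. -/
theorem uniform_tightness_of_normalized_rearrangements (n : ℕ) (hn : 1 ≤ n) (p : ℝ)
    (hp : 1 ≤ p) (Θ : ℝ → ℝ) (hΘpos : ∀ ρ > (0 : ℝ), 0 < Θ ρ)
    (hΘ : Tendsto Θ atTop (nhds 0))
    (f : ℕ → EuclideanSpace ℝ (Fin n) → ℝ)
    (hmeas : ∀ i, Measurable (f i)) (hnonneg : ∀ i x, 0 ≤ f i x)
    (hradial : ∀ i (x y : EuclideanSpace ℝ (Fin n)), ‖x‖ ≤ ‖y‖ → f i y ≤ f i x)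
    (hnorm : ∀ i, (∫ x, f i x ^ p) = 1)
    (hupper : ∀ i ρ, 0 < ρ → (∫ x in {x | ρ < f i x}, f i x ^ p) ≤ Θ ρ)
    (hlower : ∀ i ρ, 0 < ρ → (∫ x in {x | f i x < ρ}, f i x ^ p) ≤ Θ ρ⁻¹) :
    ∀ ε > (0 : ℝ), ∃ r R : ℝ, 0 < r ∧ 0 < R ∧ ∀ i,
      (∫ x in {x : EuclideanSpace ℝ (Fin n) | ‖x‖ ≤ r}, f i x ^ p) ≤ ε ∧
      (∫ x in {x : EuclideanSpace ℝ (Fin n) | R ≤ ‖x‖}, f i x ^ p) ≤ ε :=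
  uniform_tightness_of_normalized_rearrangements_general n hn p hp Θ hΘ f hmeas hnonneg hradial
    hnorm hupper hlower
end

section
/- Let a < b ∈ ℝ, 1 ≤ q < ∞, B > 0. For each i ∈ ℕ and s ∈ ℝ let I_{i,s} ⊂ [−B,B] be an interval, with (x,s) ↦ 1_{I_{i,s}}(x) jointly measurable. Then the sequence of functions g_i(x) = ∫_a^b 1_{I_{i,s}}(x) ds is precompact in L^q(ℝ). -/
/-!
Each `gᵢ` takes values in `[0, b - a]`, vanishes outside `[-B, B]`, and has total variation at
most `2 (b - a)`: the indicator of an interval is the difference of the indicators of two upper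
sets, so its variation is at most `2`, and variation does not increase under integration in `s`.
Helly's selection theorem, applied to the two monotone parts of the Jordan decompositions, gives
a subsequence converging almost everywhere, and dominated convergence with the bound
`(b - a) 1_[-B, B]` upgrades this to convergence in `Lᵠ`.
-/

open MeasureTheory Filter Set Topology

theorem eVariationOn_sub_le {α E : Type*} [LinearOrder α] [SeminormedAddCommGroup E]
    (f g : α → E) (s : Set α) :
    eVariationOn (f - g) s ≤ eVariationOn f s + eVariationOn g s := by
  refine iSup_le fun ⟨n, u, hu, us⟩ => ?_
  calc ∑ i ∈ Finset.range n, edist ((f - g) (u (i + 1))) ((f - g) (u i))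
      ≤ ∑ i ∈ Finset.range n,
          (edist (f (u (i + 1))) (f (u i)) + edist (g (u (i + 1))) (g (u i))) := by
        gcongr with i
        simp only [Pi.sub_apply, edist_eq_enorm_sub, sub_sub_sub_comm]
        exact enorm_sub_le
    _ = _ := Finset.sum_add_distrib
    _ ≤ _ := add_le_add (eVariationOn.sum_le hu us) (eVariationOn.sum_le hu us)

theorem Monotone.eVariationOn_le_of_mem_Icc {α : Type*} [LinearOrder α] {f : α → ℝ}
    (hf : Monotone f) {m M : ℝ} (hfm : ∀ x, f x ∈ Icc m M) (s : Set α) :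
    eVariationOn f s ≤ ENNReal.ofReal (M - m) := by
  rw [eVariationOn.eq_biSup_inter_Icc]
  refine iSup₂_le fun p hp => ?_
  rw [(hf.monotoneOn s).eVariationOn_eq hp.1 hp.2.1]
  exact ENNReal.ofReal_le_ofReal (by linarith [(hfm p.2).2, (hfm p.1).1])

theorem IsUpperSet.eVariationOn_indicator_one_le {α : Type*} [LinearOrder α] {U : Set α}
    (hU : IsUpperSet U) (s : Set α) :
    eVariationOn (U.indicator fun _ => (1 : ℝ)) s ≤ 1 := by
  have hmono : Monotone (U.indicator fun _ => (1 : ℝ)) := by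
    intro x y hxy
    by_cases hx : x ∈ U
    · simp [hx, hU hxy hx]
    · simp only [hx, not_false_eq_true, indicator_of_notMem]
      exact indicator_nonneg (fun _ _ => zero_le_one) y
  simpa using hmono.eVariationOn_le_of_mem_Icc (fun x =>
    ⟨indicator_nonneg (fun _ _ => zero_le_one) x, indicator_le_self' (fun _ _ => zero_le_one) x⟩) s

theorem Set.OrdConnected.eVariationOn_indicator_one_le {α : Type*} [LinearOrder α] {J : Set α}
    (hJ : J.OrdConnected) (s : Set α) :
    eVariationOn (J.indicator fun _ => (1 : ℝ)) s ≤ 2 := by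
  set U : Set α := ↑(upperClosure J)
  -- `U \ J` consists of the strict upper bounds of `J`
  have hUJ : IsUpperSet (U \ J) := by
    rintro x y hxy ⟨hxU, hxJ⟩
    refine ⟨(upperClosure J).upper hxy hxU, fun hyJ => hxJ ?_⟩
    obtain ⟨z, hzJ, hzx⟩ := mem_upperClosure.1 hxU
    exact hJ.out hzJ hyJ ⟨hzx, hxy⟩
  have hsplit : J.indicator (fun _ => (1 : ℝ)) =
      U.indicator (fun _ => 1) - (U \ J).indicator (fun _ => 1) := by
    rw [indicator_sdiff subset_upperClosure, sub_sub_cancel]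
  calc eVariationOn (J.indicator fun _ => (1 : ℝ)) s
      ≤ eVariationOn (U.indicator fun _ => (1 : ℝ)) s +
          eVariationOn ((U \ J).indicator fun _ => (1 : ℝ)) s := by
        rw [hsplit]; exact eVariationOn_sub_le _ _ s
    _ ≤ 1 + 1 := add_le_add ((upperClosure J).upper.eVariationOn_indicator_one_le s)
        (hUJ.eVariationOn_indicator_one_le s)
    _ = 2 := one_add_one_eq_two

theorem eVariationOn_integral_le {ι α E : Type*} [MeasurableSpace ι] {μ : Measure ι}
    [LinearOrder α] [NormedAddCommGroup E] [NormedSpace ℝ E] {f : ι → α → E}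
    (hf : ∀ x, Integrable (fun i => f i x) μ) (s : Set α) :
    eVariationOn (fun x => ∫ i, f i x ∂μ) s ≤ ∫⁻ i, eVariationOn (f i) s ∂μ := by
  refine iSup_le fun ⟨n, u, hu, us⟩ => ?_
  calc ∑ k ∈ Finset.range n, edist (∫ i, f i (u (k + 1)) ∂μ) (∫ i, f i (u k) ∂μ)
      ≤ ∑ k ∈ Finset.range n, ∫⁻ i, ‖f i (u (k + 1)) - f i (u k)‖ₑ ∂μ := by
        gcongr with k
        rw [edist_eq_enorm_sub, ← integral_sub (hf _) (hf _)]
        exact enorm_integral_le_lintegral_enorm _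
    _ = ∫⁻ i, ∑ k ∈ Finset.range n, edist (f i (u (k + 1))) (f i (u k)) ∂μ := by
        simp only [edist_eq_enorm_sub]
        exact (lintegral_finsetSum' _ fun k _ =>
          ((hf _).sub (hf _)).aestronglyMeasurable.enorm).symm
    _ ≤ _ := lintegral_mono fun i => eVariationOn.sum_le hu us

theorem LocallyBoundedVariationOn.measurable {f : ℝ → ℝ} (hf : LocallyBoundedVariationOn f univ) :
    Measurable f := by
  obtain ⟨p, q, hp, hq, rfl⟩ := hf.exists_monotoneOn_sub_monotoneOn
  exact (monotoneOn_univ.1 hp).measurable.sub (monotoneOn_univ.1 hq).measurable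

theorem exists_subseq_tendsto_of_abs_le {α : Type*} [Countable α] {F : ℕ → α → ℝ} {C : ℝ}
    (hF : ∀ n a, |F n a| ≤ C) :
    ∃ φ : ℕ → ℕ, StrictMono φ ∧
      ∃ f : α → ℝ, ∀ a, Tendsto (fun n => F (φ n) a) atTop (𝓝 (f a)) := by
  obtain ⟨f, φ, hφ, hlim⟩ := CompactSpace.tendsto_subseq
    fun n (a : α) => (⟨F n a, abs_le.1 (hF n a)⟩ : Icc (-C) C)
  exact ⟨φ, hφ, fun a => f a, fun a =>
    (continuous_subtype_val.tendsto _).comp ((continuous_apply a).tendsto _ |>.comp hlim)⟩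

theorem Monotone.exists_monotone_between_rat {f : ℚ → ℝ} (hf : Monotone f) :
    ∃ G : ℝ → ℝ, Monotone G ∧ (∀ (x : ℝ) (r : ℚ), x < r → G x ≤ f r) ∧
      ∀ (x : ℝ) (r : ℚ), (r : ℝ) < x → f r ≤ G x := by
  have hne : ∀ x : ℝ, Nonempty {r : ℚ // x < r} := fun x =>
    let ⟨r, hr⟩ := exists_rat_gt x; ⟨⟨r, hr⟩⟩
  have hlow : ∀ (x : ℝ) (p : ℚ), (p : ℝ) < x → ∀ r : {r : ℚ // x < r}, f p ≤ f r :=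
    fun x p hp r => hf (show p ≤ r.1 by exact_mod_cast (hp.trans r.2).le)
  have hbdd : ∀ x : ℝ, BddBelow (range fun r : {r : ℚ // x < r} => f r) := fun x =>
    let ⟨p, hp⟩ := exists_rat_lt x; ⟨f p, forall_mem_range.2 (hlow x p hp)⟩
  set G : ℝ → ℝ := fun x => ⨅ r : {r : ℚ // x < r}, f r
  have hGf : ∀ (x : ℝ) (r : ℚ), x < r → G x ≤ f r := fun x r hr => ciInf_le (hbdd x) ⟨r, hr⟩
  have hfG : ∀ (x : ℝ) (r : ℚ), (r : ℝ) < x → f r ≤ G x := fun x r hr => le_ciInf (hlow x r hr)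
  refine ⟨G, fun x y hxy => ?_, hGf, hfG⟩
  rcases hxy.lt_or_eq with hxy | rfl
  · obtain ⟨r, hxr, hry⟩ := exists_rat_btwn hxy
    exact (hGf x r hxr).trans (hfG y r hry)
  · exact le_rfl

theorem tendsto_of_tendsto_rat_of_continuousAt {F : ℕ → ℝ → ℝ} (hF : ∀ n, Monotone (F n))
    {f : ℚ → ℝ} (hFf : ∀ r : ℚ, Tendsto (fun n => F n r) atTop (𝓝 (f r))) {G : ℝ → ℝ}
    (hGf : ∀ (x : ℝ) (r : ℚ), x < r → G x ≤ f r)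
    (hfG : ∀ (x : ℝ) (r : ℚ), (r : ℝ) < x → f r ≤ G x)
    {x : ℝ} (hx : ContinuousAt G x) :
    Tendsto (fun n => F n x) atTop (𝓝 (G x)) := by
  refine tendsto_order.2 ⟨fun c hc => ?_, fun c hc => ?_⟩
  · obtain ⟨y, hcy, hyx⟩ := ((eventually_nhdsWithin_of_eventually_nhds
      (hx.eventually (lt_mem_nhds hc))).and self_mem_nhdsWithin : ∀ᶠ y in 𝓝[<] x, _).exists
    obtain ⟨r, hyr, hrx⟩ := exists_rat_btwn hyx
    filter_upwards [(hFf r).eventually (lt_mem_nhds (hcy.trans_le (hGf y r hyr)))] with n hn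
    exact hn.trans_le (hF n hrx.le)
  · obtain ⟨y, hcy, hxy⟩ := ((eventually_nhdsWithin_of_eventually_nhds
      (hx.eventually (gt_mem_nhds hc))).and self_mem_nhdsWithin : ∀ᶠ y in 𝓝[>] x, _).exists
    obtain ⟨r, hxr, hry⟩ := exists_rat_btwn hxy
    filter_upwards [(hFf r).eventually (gt_mem_nhds ((hfG y r hry).trans_lt hcy))] with n hn
    exact (hF n hxr.le).trans_lt hn

theorem exists_subseq_ae_tendsto_of_monotone {μ : Measure ℝ} [NullSingletonClass μ]
    {F : ℕ → ℝ → ℝ} (hF : ∀ n, Monotone (F n)) {C : ℝ} (hC : ∀ n x, |F n x| ≤ C) :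
    ∃ φ : ℕ → ℕ, StrictMono φ ∧ ∃ G : ℝ → ℝ, Monotone G ∧
      ∀ᵐ x ∂μ, Tendsto (fun n => F (φ n) x) atTop (𝓝 (G x)) := by
  obtain ⟨φ, hφ, f, hlim⟩ := exists_subseq_tendsto_of_abs_le (F := fun n (r : ℚ) => F n r)
    fun n r => hC n r
  have hf : Monotone f := fun p r hpr => le_of_tendsto_of_tendsto' (hlim p) (hlim r)
    fun n => hF (φ n) (by exact_mod_cast hpr)
  obtain ⟨G, hG, hGf, hfG⟩ := hf.exists_monotone_between_rat
  refine ⟨φ, hφ, G, hG, ?_⟩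
  filter_upwards [hG.countable_not_continuousAt.ae_notMem μ] with x hx
  exact tendsto_of_tendsto_rat_of_continuousAt (fun n => hF (φ n)) hlim hGf hfG (not_not.1 hx)

theorem exists_subseq_ae_tendsto_of_eVariationOn_le {μ : Measure ℝ} [NullSingletonClass μ]
    {F : ℕ → ℝ → ℝ} {C : ℝ} {V : ENNReal} (hC : ∀ n x, |F n x| ≤ C)
    (hV : ∀ n, eVariationOn (F n) univ ≤ V) (hV_ne_top : V ≠ ⊤) :
    ∃ φ : ℕ → ℕ, StrictMono φ ∧ ∃ G : ℝ → ℝ, Measurable G ∧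
      ∀ᵐ x ∂μ, Tendsto (fun n => F (φ n) x) atTop (𝓝 (G x)) := by
  have hbv : ∀ n, LocallyBoundedVariationOn (F n) univ := fun n =>
    BoundedVariationOn.locallyBoundedVariationOn (ne_top_of_le_ne_top hV_ne_top (hV n))
  -- Jordan decomposition `F n = P n - (P n - F n)` into uniformly bounded monotone parts
  set P : ℕ → ℝ → ℝ := fun n => variationOnFromTo (F n) univ 0
  have hP : ∀ n, Monotone (P n) := fun n =>
    monotoneOn_univ.1 (variationOnFromTo.monotoneOn (hbv n) (mem_univ 0))
  have hQ : ∀ n, Monotone (P n - F n) := fun n =>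
    monotoneOn_univ.1 (variationOnFromTo.sub_self_monotoneOn (hbv n) (mem_univ 0))
  have hPV : ∀ n x, |P n x| ≤ V.toReal := fun n x =>
    (variationOnFromTo.abs_le_eVariationOn (ne_top_of_le_ne_top hV_ne_top (hV n))).trans
      (ENNReal.toReal_mono hV_ne_top (hV n))
  obtain ⟨φ₁, hφ₁, GP, hGP, hlimP⟩ := exists_subseq_ae_tendsto_of_monotone (μ := μ) hP hPV
  obtain ⟨φ₂, hφ₂, GQ, hGQ, hlimQ⟩ := exists_subseq_ae_tendsto_of_monotone (μ := μ)
    (fun n => hQ (φ₁ n)) (C := V.toReal + C) fun n x =>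
      (abs_sub _ _).trans (add_le_add (hPV _ x) (hC _ x))
  refine ⟨φ₁ ∘ φ₂, hφ₁.comp hφ₂, GP - GQ, hGP.measurable.sub hGQ.measurable, ?_⟩
  filter_upwards [hlimP, hlimQ] with x hPx hQx
  simpa using (hPx.comp hφ₂.tendsto_atTop).sub hQx

theorem tendsto_eLpNorm_zero_of_dominated {α E : Type*} [MeasurableSpace α] {μ : Measure α}
    [NormedAddCommGroup E] {p : ENNReal} (hp : p ≠ ⊤) {F : ℕ → α → E} {bound : α → ℝ}
    (hF : ∀ n, AEStronglyMeasurable (F n) μ) (hbound : MemLp bound p μ)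
    (hF_le : ∀ n, ∀ᵐ x ∂μ, ‖F n x‖ ≤ bound x)
    (hlim : ∀ᵐ x ∂μ, Tendsto (fun n => F n x) atTop (𝓝 0)) :
    Tendsto (fun n => eLpNorm (F n) p μ) atTop (𝓝 0) := by
  rcases eq_or_ne p 0 with rfl | hp0
  · simp
  have hpos : 0 < p.toReal := ENNReal.toReal_pos hp0 hp
  have hint : Tendsto (fun n => ∫⁻ x, ‖F n x‖ₑ ^ p.toReal ∂μ) atTop (𝓝 0) := by
    have hrpow : Continuous fun t : ENNReal => t ^ p.toReal := ENNReal.continuous_rpow_const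
    simpa [ENNReal.zero_rpow_of_pos hpos] using
      tendsto_lintegral_of_dominated_convergence' (fun x => ‖bound x‖ₑ ^ p.toReal)
        (fun n => (hF n).enorm.pow_const _)
        (fun n => (hF_le n).mono fun x hx =>
          ENNReal.rpow_le_rpow (enorm_le_iff_norm_le.2 (hx.trans (le_abs_self _))) hpos.le)
        (lintegral_rpow_enorm_lt_top_of_eLpNorm_lt_top hp0 hp hbound.2).ne
        (hlim.mono fun x hx => (hrpow.tendsto _).comp ((continuous_enorm.tendsto _).comp hx))
  simp_rw [eLpNorm_eq_lintegral_rpow_enorm_toReal hp0 hp]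
  simpa [Function.comp_def, hpos] using
    ((ENNReal.continuous_rpow_const (y := 1 / p.toReal)).tendsto 0).comp hint

section Superposition

variable {a b : ℝ} {J : ℝ → Set ℝ}

theorem integrable_indicator_one_of_measurable
    (hJ : Measurable fun p : ℝ × ℝ => (J p.2).indicator (fun _ => (1 : ℝ)) p.1)
    (μ : Measure ℝ) [IsFiniteMeasure μ] (x : ℝ) :
    Integrable (fun s => (J s).indicator (fun _ => (1 : ℝ)) x) μ :=
  Integrable.of_bound (hJ.comp (measurable_const.prodMk measurable_id)).aestronglyMeasurable 1
    (ae_of_all _ fun _ => (norm_indicator_le_norm_self _ _).trans_eq norm_one)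

theorem intervalIntegral_indicator_one_mem_Icc
    (hJ : Measurable fun p : ℝ × ℝ => (J p.2).indicator (fun _ => (1 : ℝ)) p.1) (hab : a ≤ b)
    {K : Set ℝ} (hJK : ∀ s, J s ⊆ K) (x : ℝ) :
    ∫ s in a..b, (J s).indicator (fun _ => (1 : ℝ)) x ∈ Icc 0 (K.indicator (fun _ => b - a) x) := by
  by_cases hx : x ∈ K
  · rw [indicator_of_mem hx, intervalIntegral.integral_of_le hab]
    refine ⟨integral_nonneg fun s => indicator_nonneg (fun _ _ => zero_le_one) x, ?_⟩
    calc ∫ s in Ioc a b, (J s).indicator (fun _ => (1 : ℝ)) x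
        ≤ ∫ _ in Ioc a b, (1 : ℝ) :=
          integral_mono (integrable_indicator_one_of_measurable hJ _ x) (integrable_const 1)
            fun s => indicator_le_self' (fun _ _ => zero_le_one) x
      _ = b - a := by simp [hab]
  · have hzero : ∀ s, (J s).indicator (fun _ => (1 : ℝ)) x = 0 := fun s =>
      indicator_of_notMem (fun h => hx (hJK s h)) _
    simp [hx, hzero]

theorem eVariationOn_intervalIntegral_indicator_one_le
    (hJ : Measurable fun p : ℝ × ℝ => (J p.2).indicator (fun _ => (1 : ℝ)) p.1) (hab : a ≤ b)
    (hJc : ∀ s, (J s).OrdConnected) :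
    eVariationOn (fun x => ∫ s in a..b, (J s).indicator (fun _ => (1 : ℝ)) x) univ ≤
      2 * ENNReal.ofReal (b - a) := by
  simp_rw [intervalIntegral.integral_of_le hab]
  calc _ ≤ ∫⁻ s in Ioc a b, eVariationOn ((J s).indicator fun _ => (1 : ℝ)) univ :=
        eVariationOn_integral_le (integrable_indicator_one_of_measurable hJ _) univ
    _ ≤ ∫⁻ _ in Ioc a b, 2 := lintegral_mono fun s => (hJc s).eVariationOn_indicator_one_le univ
    _ = 2 * ENNReal.ofReal (b - a) := by rw [setLIntegral_const, Real.volume_Ioc]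

end Superposition

theorem superposition_of_intervals_precompact_general (a b : ℝ) (hab : a < b) (q : ℝ)
    (B : ℝ) (I : ℕ → ℝ → Set ℝ)
    (hIinterval : ∀ i s, (I i s).OrdConnected)
    (hIsub : ∀ i s, I i s ⊆ Set.Icc (-B) B)
    (hImeas : ∀ i, Measurable fun p : ℝ × ℝ => (I i p.2).indicator (fun _ => (1 : ℝ)) p.1) :
    ∀ φ : ℕ → ℕ, StrictMono φ →
      ∃ ψ : ℕ → ℕ, StrictMono ψ ∧
        ∃ g : ℝ → ℝ,
          Tendsto
            (fun j =>
              eLpNorm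
                (fun x =>
                  (∫ s in a..b, (I (φ (ψ j)) s).indicator (fun _ => (1 : ℝ)) x) - g x)
                (ENNReal.ofReal q) volume)
            atTop (nhds 0) := by
  intro φ _
  set g : ℕ → ℝ → ℝ := fun i x => ∫ s in a..b, (I i s).indicator (fun _ => (1 : ℝ)) x
  set bound : ℝ → ℝ := (Icc (-B) B).indicator fun _ => b - a
  have hg_mem : ∀ i x, g i x ∈ Icc 0 (bound x) := fun i =>
    intervalIntegral_indicator_one_mem_Icc (hImeas i) hab.le (hIsub i)
  have hg_var : ∀ i, eVariationOn (g i) univ ≤ 2 * ENNReal.ofReal (b - a) := fun i =>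
    eVariationOn_intervalIntegral_indicator_one_le (hImeas i) hab.le (hIinterval i)
  have hg_meas : ∀ i, Measurable (g i) := fun i =>
    (BoundedVariationOn.locallyBoundedVariationOn
      (ne_top_of_le_ne_top (by finiteness) (hg_var i))).measurable
  have hg_abs : ∀ i x, |g i x| ≤ b - a := fun i x =>
    abs_le.2 ⟨by linarith [(hg_mem i x).1, hab], (hg_mem i x).2.trans
      (indicator_le_self' (fun _ _ => sub_nonneg.2 hab.le) x)⟩
  obtain ⟨ψ, hψ, G, hG, hlim⟩ := exists_subseq_ae_tendsto_of_eVariationOn_le (μ := volume)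
    (fun j => hg_abs (φ j)) (fun j => hg_var (φ j)) (by finiteness)
  have hG_mem : ∀ᵐ x, G x ∈ Icc 0 (bound x) := hlim.mono fun x hx =>
    isClosed_Icc.mem_of_tendsto hx (Eventually.of_forall fun j => hg_mem _ x)
  refine ⟨ψ, hψ, G, tendsto_eLpNorm_zero_of_dominated (F := fun j x => g (φ (ψ j)) x - G x)
    (bound := bound) ENNReal.ofReal_ne_top (fun j => ((hg_meas _).sub hG).aestronglyMeasurable)
    (memLp_indicator_const _ measurableSet_Icc (b - a) (Or.inr measure_Icc_lt_top.ne))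
    (fun j => hG_mem.mono fun x hx => ?_)
    (hlim.mono fun x hx => by simpa using hx.sub_const (G x))⟩
  have hgx := hg_mem (φ (ψ j)) x
  rw [Real.norm_eq_abs, abs_sub_le_iff]
  constructor <;> linarith [hgx.1, hgx.2, hx.1, hx.2]

/-- Let `a < b`, `1 ≤ q < ∞`, `B > 0`, and for each `i ∈ ℕ`, `s ∈ ℝ` let
`I_{i,s} ⊆ [−B,B]` be an interval with `(x,s) ↦ 1_{I_{i,s}}(x)` jointly measurable. Then the
sequence `gᵢ(x) = ∫_a^b 1_{I_{i,s}}(x) ds` is precompact in `L^q(ℝ)`: every subsequence has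
a further subsequence converging in `L^q` norm. -/
theorem superposition_of_intervals_precompact (a b : ℝ) (hab : a < b) (q : ℝ) (hq : 1 ≤ q)
    (B : ℝ) (hB : 0 < B) (I : ℕ → ℝ → Set ℝ)
    (hIinterval : ∀ i s, (I i s).OrdConnected)
    (hIsub : ∀ i s, I i s ⊆ Set.Icc (-B) B)
    (hImeas : ∀ i, Measurable fun p : ℝ × ℝ => (I i p.2).indicator (fun _ => (1 : ℝ)) p.1) :
    ∀ φ : ℕ → ℕ, StrictMono φ →
      ∃ ψ : ℕ → ℕ, StrictMono ψ ∧
        ∃ g : ℝ → ℝ,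
          Tendsto
            (fun j =>
              eLpNorm
                (fun x =>
                  (∫ s in a..b, (I (φ (ψ j)) s).indicator (fun _ => (1 : ℝ)) x) - g x)
                (ENNReal.ofReal q) volume)
            atTop (nhds 0) :=
  superposition_of_intervals_precompact_general a b hab q B I hIinterval hIsub hImeas
end

section
/- Fix k ≥ 2. Let H(x) = ∫_{ℝ^k} ∏_{α ∈ {0,1}^k, α ≠ 0} 1_{[−1,1]}(x + α·h⃗) dh⃗ for x ∈ ℝ, where α·h⃗ = ∑ᵢ αᵢhᵢ. Then H is a continuous, nonnegative, even function whose support is exactly the interval [−(k+1)/(k−1), (k+1)/(k−1)]. -/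
open MeasureTheory

/-- `H(x) = ∫_{ℝ^k} ∏_{α ∈ {0,1}^k, α ≠ 0} 1_{[−1,1]}(x + α·h⃗) dh⃗`. -/
noncomputable def Hfun (k : ℕ) (x : ℝ) : ℝ :=
  ∫ h : Fin k → ℝ,
    ∏ α ∈ Finset.univ.filter (fun α : Fin k → Bool => α ≠ fun _ => false),
      Set.indicator (Set.Icc (-1 : ℝ) 1) (fun _ => (1 : ℝ))
        (x + ∑ i, if α i then h i else 0)

/-!
`Hfun k x` is the volume of the polytope `P_x = {h | |x + α·h| ≤ 1 for all α ≠ 0}`, and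
`P_{-x} = -P_x`. The constraints for the unit vectors put every `h i` in `[-1 - x, 1 - x]`;
summing them and comparing with the constraint for `α = (1, …, 1)` gives
`(k - 1) |x| ≤ k + 1` on `P_x`. Conversely, if `(k - 1) |x| < k + 1`, the constant vector
`h i = -2x / (k + 1)` satisfies every constraint strictly (for `α` with `j` ones,
`x + j h i = x (k + 1 - 2j) / (k + 1)` and `|k + 1 - 2j| ≤ k - 1`), so `P_x` has nonempty
interior. Continuity is dominated convergence: for fixed `h` the integrand is continuous in `x`
off the hyperplanes `α·h = ±1 - x`, which are null.
-/

open Set Filter Metric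

theorem MeasureTheory.Measure.addHaar_preimage_singleton_eq_zero {E : Type*}
    [NormedAddCommGroup E] [NormedSpace ℝ E] [MeasurableSpace E] [BorelSpace E]
    [FiniteDimensional ℝ E] (μ : Measure E) [μ.IsAddHaarMeasure] {L : E →ₗ[ℝ] ℝ} (hL : L ≠ 0)
    (c : ℝ) : μ (L ⁻¹' {c}) = 0 := by
  obtain ⟨v, rfl⟩ := L.surjective_or_eq_zero.resolve_right hL c
  have hker : L ⁻¹' {L v} = (· + -v) ⁻¹' (LinearMap.ker L : Set E) := by
    ext h; simp [← sub_eq_add_neg, sub_eq_zero]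
  rw [hker, measure_preimage_add_right]
  exact addHaar_submodule μ _ (by simpa [LinearMap.ker_eq_top] using hL)

theorem tsupport_eq_Icc_of_ne_zero_of_eq_zero {f : ℝ → ℝ} {M : ℝ} (hM : 0 < M)
    (hpos : ∀ x, |x| < M → f x ≠ 0) (hzero : ∀ x, M < |x| → f x = 0) : tsupport f = Icc (-M) M := by
  apply subset_antisymm
  · refine closure_minimal (fun x hx => ?_) isClosed_Icc
    rw [mem_Icc, ← abs_le]
    by_contra! h
    exact hx (hzero x h)
  · rw [← closure_Ioo (by linarith : -M ≠ M)]
    exact closure_mono fun x hx => hpos x (abs_lt.mpr hx)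

namespace Hfun

variable {k : ℕ}

abbrev nonzeroBoolVecs (k : ℕ) : Finset (Fin k → Bool) :=
  Finset.univ.filter fun α : Fin k → Bool => α ≠ fun _ => false

def boolDot (α : Fin k → Bool) : (Fin k → ℝ) →ₗ[ℝ] ℝ where
  toFun h := ∑ i, if α i then h i else 0
  map_add' h h' := by simp only [Pi.add_apply, ← Finset.sum_add_distrib, ite_add_zero]
  map_smul' c h := by simp [Finset.mul_sum]

theorem boolDot_apply (α : Fin k → Bool) (h : Fin k → ℝ) :
    boolDot α h = ∑ i, if α i then h i else 0 := rfl

theorem boolDot_single (i : Fin k) (h : Fin k → ℝ) :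
    boolDot (fun j => decide (j = i)) h = h i := by
  simp [boolDot_apply]

theorem boolDot_true (h : Fin k → ℝ) : boolDot (fun _ => true) h = ∑ i, h i := by
  simp [boolDot_apply]

theorem boolDot_const (α : Fin k → Bool) (t : ℝ) :
    boolDot α (fun _ => t) = (Finset.univ.filter fun i => α i).card * t := by
  simp [boolDot_apply, Finset.sum_ite]

theorem single_mem_nonzeroBoolVecs (i : Fin k) :
    (fun j => decide (j = i)) ∈ nonzeroBoolVecs k := by
  simp [funext_iff]

theorem true_mem_nonzeroBoolVecs (hk : 0 < k) : (fun _ => true) ∈ nonzeroBoolVecs k := by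
  simp [funext_iff, Fin.pos_iff_nonempty.mp hk]

theorem exists_eq_true_of_mem_nonzeroBoolVecs {α : Fin k → Bool} (hα : α ∈ nonzeroBoolVecs k) :
    ∃ i, α i = true := by
  simpa [funext_iff] using hα

theorem boolDot_ne_zero {α : Fin k → Bool} (hα : α ∈ nonzeroBoolVecs k) : boolDot α ≠ 0 := by
  obtain ⟨i, hi⟩ := exists_eq_true_of_mem_nonzeroBoolVecs hα
  intro h0
  have h1 := LinearMap.congr_fun h0 (Pi.single i 1)
  rw [boolDot_apply, Finset.sum_eq_single i (fun j _ hj => by simp [hj])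
    (by simp)] at h1
  simp [hi] at h1

def feasibleSet (k : ℕ) (x : ℝ) : Set (Fin k → ℝ) :=
  ⋂ α ∈ nonzeroBoolVecs k, (fun h => x + boolDot α h) ⁻¹' Icc (-1) 1

theorem mem_feasibleSet {x : ℝ} {h : Fin k → ℝ} :
    h ∈ feasibleSet k x ↔ ∀ α ∈ nonzeroBoolVecs k, x + boolDot α h ∈ Icc (-1) 1 := by
  simp only [feasibleSet, mem_iInter, mem_preimage]

theorem continuous_boolDot (α : Fin k → Bool) : Continuous (boolDot α) :=
  LinearMap.continuous_of_finiteDimensional _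

theorem isClosed_feasibleSet (k : ℕ) (x : ℝ) : IsClosed (feasibleSet k x) :=
  isClosed_biInter fun α _ =>
    isClosed_Icc.preimage (continuous_const.add (continuous_boolDot α))

theorem prod_indicator_eq_indicator_feasibleSet (x : ℝ) (h : Fin k → ℝ) :
    ∏ α ∈ nonzeroBoolVecs k, (Icc (-1 : ℝ) 1).indicator (fun _ => (1 : ℝ)) (x + boolDot α h) =
      (feasibleSet k x).indicator 1 h := by
  have hpre : ∀ α, (Icc (-1 : ℝ) 1).indicator (fun _ => (1 : ℝ)) (x + boolDot α h) =
      ((fun h => x + boolDot α h) ⁻¹' Icc (-1) 1).indicator (1 : (Fin k → ℝ) → ℝ) h :=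
    fun _ => rfl
  rw [Finset.prod_congr rfl fun α _ => hpre α, prod_indicator_const_apply, one_pow]
  rfl

theorem add_mem_Icc_of_mem_feasibleSet {x : ℝ} {h : Fin k → ℝ} (hh : h ∈ feasibleSet k x)
    (i : Fin k) : x + h i ∈ Icc (-1) 1 := by
  simpa [boolDot_single] using mem_feasibleSet.mp hh _ (single_mem_nonzeroBoolVecs i)

theorem feasibleSet_subset_closedBall (k : ℕ) (x : ℝ) :
    feasibleSet k x ⊆ closedBall 0 (1 + |x|) := by
  intro h hh
  rw [mem_closedBall_zero_iff, pi_norm_le_iff_of_nonneg (by positivity)]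
  intro i
  have := abs_le.mpr (add_mem_Icc_of_mem_feasibleSet hh i)
  calc ‖h i‖ = |(x + h i) - x| := by rw [Real.norm_eq_abs]; ring_nf
    _ ≤ 1 + |x| := (abs_sub _ _).trans (by gcongr)

theorem feasibleSet_neg (k : ℕ) (x : ℝ) : feasibleSet k (-x) = -feasibleSet k x := by
  ext h
  simp only [Set.mem_neg, mem_feasibleSet, map_neg]
  refine forall₂_congr fun α _ => ?_
  rw [show -x + boolDot α h = -(x + -boolDot α h) by ring, neg_mem_Icc_iff, neg_neg]

theorem sub_one_mul_abs_le_of_mem_feasibleSet (hk : 0 < k) {x : ℝ} {h : Fin k → ℝ}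
    (hh : h ∈ feasibleSet k x) : ((k : ℝ) - 1) * |x| ≤ k + 1 := by
  have hsum := mem_feasibleSet.mp hh _ (true_mem_nonzeroBoolVecs hk)
  rw [boolDot_true] at hsum
  have hle : ∑ i, h i ≤ ∑ _i : Fin k, (1 - x) :=
    Finset.sum_le_sum fun i _ => by linarith [(add_mem_Icc_of_mem_feasibleSet hh i).2]
  have hge : ∑ _i : Fin k, (-1 - x) ≤ ∑ i, h i :=
    Finset.sum_le_sum fun i _ => by linarith [(add_mem_Icc_of_mem_feasibleSet hh i).1]
  simp only [Finset.sum_const, Finset.card_univ, Fintype.card_fin, nsmul_eq_mul] at hle hge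
  rcases abs_cases x with ⟨hx, -⟩ | ⟨hx, -⟩ <;> rw [hx] <;> linarith [hsum.1, hsum.2]

theorem abs_add_boolDot_const_lt_one {x : ℝ} (hx : ((k : ℝ) - 1) * |x| < k + 1)
    {α : Fin k → Bool} (hα : α ∈ nonzeroBoolVecs k) :
    |x + boolDot α (fun _ => -2 * x / (k + 1))| < 1 := by
  obtain ⟨i, hi⟩ := exists_eq_true_of_mem_nonzeroBoolVecs hα
  have hj1 : 1 ≤ (Finset.univ.filter fun i => α i).card :=
    Finset.card_pos.mpr ⟨i, by simp [hi]⟩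
  have hjk : (Finset.univ.filter fun i => α i).card ≤ k :=
    (Finset.card_filter_le _ _).trans (by simp)
  rw [boolDot_const]
  generalize (Finset.univ.filter fun i => α i).card = j at hj1 hjk ⊢
  have hj1' : (1 : ℝ) ≤ j := by exact_mod_cast hj1
  have hjk' : (j : ℝ) ≤ k := by exact_mod_cast hjk
  have hk : (0 : ℝ) < k + 1 := by positivity
  rw [show x + j * (-2 * x / (k + 1)) = x * (k + 1 - 2 * j) / (k + 1) by
    field_simp; ring, abs_div, abs_mul, abs_of_pos hk, div_lt_one hk]
  calc |x| * |(k : ℝ) + 1 - 2 * j| ≤ |x| * (k - 1) := by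
        gcongr; rw [abs_le]; constructor <;> linarith
    _ < k + 1 := by linarith

theorem volume_feasibleSet_lt_top (k : ℕ) (x : ℝ) : volume (feasibleSet k x) < ⊤ :=
  (measure_mono (feasibleSet_subset_closedBall k x)).trans_lt measure_closedBall_lt_top

theorem ae_add_boolDot_notMem_frontier (x : ℝ) :
    ∀ᵐ h : Fin k → ℝ, ∀ α ∈ nonzeroBoolVecs k, x + boolDot α h ∉ frontier (Icc (-1 : ℝ) 1) := by
  refine (eventually_all_finset _).mpr fun α hα => ?_
  have hnull := fun c => measure_eq_zero_iff_ae_notMem.mp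
    (Measure.addHaar_preimage_singleton_eq_zero volume (boolDot_ne_zero hα) c)
  filter_upwards [hnull (-1 - x), hnull (1 - x)] with h h₁ h₂
  rw [frontier_Icc (by norm_num), mem_insert_iff, mem_singleton_iff]
  rintro (heq | heq)
  exacts [h₁ (show boolDot α h = -1 - x by linarith), h₂ (show boolDot α h = 1 - x by linarith)]

end Hfun

open Hfun

section

variable {k : ℕ}

theorem Hfun_eq_integral (k : ℕ) (x : ℝ) :
    Hfun k x = ∫ h, ∏ α ∈ nonzeroBoolVecs k,
      (Icc (-1 : ℝ) 1).indicator (fun _ => (1 : ℝ)) (x + boolDot α h) := rfl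

theorem Hfun_eq_measureReal (k : ℕ) (x : ℝ) : Hfun k x = volume.real (feasibleSet k x) := by
  simp_rw [Hfun_eq_integral, prod_indicator_eq_indicator_feasibleSet]
  exact integral_indicator_one (isClosed_feasibleSet k x).measurableSet

theorem Hfun_nonneg (k : ℕ) (x : ℝ) : 0 ≤ Hfun k x := by
  rw [Hfun_eq_measureReal]
  exact measureReal_nonneg

theorem Hfun_neg (k : ℕ) (x : ℝ) : Hfun k (-x) = Hfun k x := by
  rw [Hfun_eq_measureReal, Hfun_eq_measureReal, feasibleSet_neg, measureReal_def,
    measureReal_def, Measure.measure_neg]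

theorem Hfun_eq_zero (hk : 0 < k) {x : ℝ} (hx : (k : ℝ) + 1 < (k - 1) * |x|) :
    Hfun k x = 0 := by
  have hempty : feasibleSet k x = ∅ := eq_empty_of_forall_notMem fun h hh =>
    (sub_one_mul_abs_le_of_mem_feasibleSet hk hh).not_gt hx
  rw [Hfun_eq_measureReal, hempty, measureReal_empty]

theorem Hfun_pos {x : ℝ} (hx : ((k : ℝ) - 1) * |x| < k + 1) : 0 < Hfun k x := by
  set U := ⋂ α ∈ nonzeroBoolVecs k, (fun h => x + boolDot α h) ⁻¹' Ioo (-1) 1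
  have hU : IsOpen U := isOpen_biInter_finset fun α _ =>
    isOpen_Ioo.preimage (continuous_const.add (continuous_boolDot α))
  have hcenter : (fun _ => -2 * x / (k + 1)) ∈ U := by
    simp only [U, mem_iInter₂, mem_preimage, mem_Ioo, ← abs_lt]
    exact fun α hα => abs_add_boolDot_const_lt_one hx hα
  have hUsub : U ⊆ feasibleSet k x := iInter₂_mono fun α _ => preimage_mono Ioo_subset_Icc_self
  rw [Hfun_eq_measureReal]
  exact ENNReal.toReal_pos
    ((hU.measure_pos volume ⟨_, hcenter⟩).trans_le (measure_mono hUsub)).ne'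
    (volume_feasibleSet_lt_top k x).ne

theorem continuous_Hfun (k : ℕ) : Continuous (Hfun k) := by
  rw [show Hfun k = _ from funext (Hfun_eq_integral k), continuous_iff_continuousAt]
  intro x₀
  have hbound : ∀ x ∈ ball x₀ 1, feasibleSet k x ⊆ closedBall 0 (2 + |x₀|) := by
    intro x hx
    rw [mem_ball, Real.dist_eq] at hx
    refine (feasibleSet_subset_closedBall k x).trans (closedBall_subset_closedBall ?_)
    linarith [abs_sub_abs_le_abs_sub x x₀]
  refine continuousAt_of_dominated (bound := (closedBall 0 (2 + |x₀|)).indicator 1)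
    (Eventually.of_forall fun x => ?_) ?_ ?_ ?_
  · simp_rw [prod_indicator_eq_indicator_feasibleSet]
    exact aestronglyMeasurable_one.indicator (isClosed_feasibleSet k x).measurableSet
  · filter_upwards [ball_mem_nhds x₀ one_pos] with x hx
    refine ae_of_all _ fun h => ?_
    rw [prod_indicator_eq_indicator_feasibleSet, Real.norm_of_nonneg (indicator_nonneg (f := 1)
      (fun _ _ => zero_le_one) h)]
    exact indicator_le_indicator_of_subset (hbound x hx) (fun _ => zero_le_one) h
  · exact (integrable_indicator_iff isClosed_closedBall.measurableSet).mpr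
      (integrableOn_const measure_closedBall_lt_top.ne)
  · filter_upwards [ae_add_boolDot_notMem_frontier x₀] with h hh
    exact tendsto_finsetProd _ fun α hα =>
      (continuousOn_const.continuousAt_indicator (hh α hα)).comp
        (f := fun x => x + boolDot α h) (continuous_add_const _).continuousAt

end

/-- For `k ≥ 2`, `H` is continuous, nonnegative, even, and its support is
exactly the interval `[−(k+1)/(k−1), (k+1)/(k−1)]`. -/
theorem Hfun_properties (k : ℕ) (hk : 2 ≤ k) :
    Continuous (Hfun k) ∧ (∀ x, 0 ≤ Hfun k x) ∧ (∀ x, Hfun k (-x) = Hfun k x) ∧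
      tsupport (Hfun k) =
        Set.Icc (-(((k : ℝ) + 1) / ((k : ℝ) - 1))) (((k : ℝ) + 1) / ((k : ℝ) - 1)) := by
  have hk1 : (0 : ℝ) < k - 1 := by
    rw [sub_pos]; exact_mod_cast hk
  refine ⟨continuous_Hfun k, Hfun_nonneg k, Hfun_neg k,
    tsupport_eq_Icc_of_ne_zero_of_eq_zero (by positivity) (fun x hx => (Hfun_pos ?_).ne')
      (fun x hx => Hfun_eq_zero (by omega) ?_)⟩
  · rwa [lt_div_iff₀ hk1, mul_comm] at hx
  · rwa [div_lt_iff₀ hk1, mul_comm] at hx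
end

section
/- Let n ≥ 1 and B ⊂ ℝⁿ a centered ball of positive radius. Let ψ : B → ℝ/ℤ be measurable and τ, η > 0 small. Suppose λ({(x,h₁) ∈ B² : x+h₁ ∈ B and |e^{2πi(ψ(x+h₁)−ψ(x))} − 1| > τ}) < η·λ({(x,h₁) ∈ B² : x+h₁ ∈ B}). Then there exist a constant c ∈ ℝ/ℤ and K > 0 (depending only on n) such that λ({x ∈ B : |e^{2πiψ(x)}e^{−2πic} − 1| > O(τ)}) < Kη·λ(B). -/
/-!
Write `e(t) = exp(2πit)` and call `(x, y)` bad if `|e(ψ y) - e(ψ x)| > τ`. Pick `x₀` in the half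
ball whose slice `{y | (x₀, y) bad}` is small; one exists because on average slices have measure
`≲ η λ(B)`. If `e(ψ x)` is `2τ`-far from `e(ψ x₀)`, then by the triangle inequality every `z` in
the ball of radius `R/4` about the midpoint of `x₀` and `x` makes `(x₀, z)` or `(z, x)` bad, so
the slice `{z | (z, x) bad}` has measure `≳ λ(B)`, and Markov's inequality bounds the measure of
such `x` by `O(η) λ(B)`. For `η ≳ 1` the bound is trivial.
-/

open MeasureTheory Complex Real Metric Set Module
open scoped ENNReal

lemma dist_exp_two_pi_I_mul (a b : ℝ) :
    dist (exp (2 * π * I * a)) (exp (2 * π * I * b)) =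
      ‖exp (2 * π * I * ((a - b : ℝ) : ℂ)) - 1‖ := by
  have h : exp (2 * π * I * a) - exp (2 * π * I * b) =
      exp (2 * π * I * b) * (exp (2 * π * I * ((a - b : ℝ) : ℂ)) - 1) := by
    rw [mul_sub, ← Complex.exp_add]; push_cast; ring_nf
  rw [dist_eq_norm, h, norm_mul, norm_exp, mul_re]
  simp

lemma norm_exp_two_pi_I_mul_exp_neg_sub_one (a c : ℝ) :
    ‖exp (2 * π * I * a) * exp (-(2 * π * I * c)) - 1‖ =
      dist (exp (2 * π * I * a)) (exp (2 * π * I * c)) := by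
  rw [dist_exp_two_pi_I_mul, ← Complex.exp_add]; push_cast; ring_nf

lemma mem_ball_zero_of_mem_ball_midpoint {E : Type*} [SeminormedAddCommGroup E]
    [NormedSpace ℝ E] {R : ℝ} {x₀ x z : E} (hx₀ : x₀ ∈ ball 0 (R / 2)) (hx : x ∈ ball 0 R)
    (hz : z ∈ ball (midpoint ℝ x₀ x) (R / 4)) :
    z ∈ ball 0 R ∧ z - x₀ ∈ ball 0 R ∧ x - z ∈ ball 0 R := by
  simp only [mem_ball] at *
  rw [dist_zero_right (z - x₀), dist_zero_right (x - z), ← dist_eq_norm, ← dist_eq_norm]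
  have h₀ : dist x₀ (midpoint ℝ x₀ x) = dist x₀ x / 2 := by
    rw [dist_left_midpoint, Real.norm_two]; ring
  have h₁ : dist x (midpoint ℝ x₀ x) = dist x₀ x / 2 := by
    rw [dist_right_midpoint, Real.norm_two, dist_comm]; ring
  have hx₀x := dist_triangle_right x₀ x 0
  refine ⟨?_, ?_, ?_⟩
  · have hm := dist_midpoint_midpoint_le x₀ x (0 : E) 0
    rw [midpoint_self] at hm
    linarith [dist_triangle z (midpoint ℝ x₀ x) 0]
  · linarith [dist_triangle z (midpoint ℝ x₀ x) x₀, dist_comm x₀ (midpoint ℝ x₀ x)]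
  · linarith [dist_triangle x (midpoint ℝ x₀ x) z, dist_comm z (midpoint ℝ x₀ x)]

lemma exists_mem_lt_of_setLIntegral_lt {α : Type*} [MeasurableSpace α] {μ : Measure α}
    {s : Set α} {f : α → ℝ≥0∞} {c : ℝ≥0∞} (hs : MeasurableSet s)
    (h : ∫⁻ x in s, f x ∂μ < c * μ s) : ∃ x ∈ s, f x < c := by
  by_contra! hc
  refine (h.trans_le ?_).false
  rw [← setLIntegral_const]
  exact setLIntegral_mono' hs hc

section ApproxInvariance

variable {E X : Type*} [NormedAddCommGroup E] [NormedSpace ℝ E] [MeasurableSpace E] [BorelSpace E]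
  [PseudoMetricSpace X] (μ : Measure E) [μ.IsAddHaarMeasure]
  {f : E → X} {R τ : ℝ}

variable (f R τ) in
/-- The bad pairs in the coordinates `(x, x + h)`, in which both slices are subsets of the ball. -/
def farPairs : Set (E × E) :=
  {p | p.1 ∈ ball 0 R ∧ p.2 - p.1 ∈ ball 0 R ∧ p.2 ∈ ball 0 R ∧ τ < dist (f p.2) (f p.1)}

lemma measurableSet_farPairs [FiniteDimensional ℝ E] [MeasurableSpace X]
    [OpensMeasurableSpace X] [SecondCountableTopology X] (hf : Measurable f) :
    MeasurableSet (farPairs f R τ) := by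
  have hball : MeasurableSet (ball (0 : E) R) := measurableSet_ball
  exact (measurable_fst hball).inter <| ((measurable_snd.sub measurable_fst) hball).inter <|
    (measurable_snd hball).inter <|
      measurableSet_lt measurable_const ((hf.comp measurable_snd).dist (hf.comp measurable_fst))

lemma measure_farPairs [FiniteDimensional ℝ E] :
    (μ.prod μ) (farPairs f R τ) = (μ.prod μ) {p | p.1 ∈ ball 0 R ∧ p.2 ∈ ball 0 R ∧
      p.1 + p.2 ∈ ball 0 R ∧ τ < dist (f (p.1 + p.2)) (f p.1)} := by
  have hshear : MeasurePreserving (MeasurableEquiv.shearAddRight E) (μ.prod μ) (μ.prod μ) :=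
    measurePreserving_prod_add μ μ
  rw [← hshear.measure_preimage_equiv]
  congr 1
  ext p
  simp [farPairs, MeasurableEquiv.shearAddRight]

lemma addHaar_ball_eq_pow_mul_ball_div [FiniteDimensional ℝ E] (x : E) (R : ℝ) {k : ℕ}
    (hk : 0 < k) :
    μ (ball x R) = k ^ finrank ℝ E * μ (ball 0 (R / k)) := by
  have hk' : (0 : ℝ) < k := Nat.cast_pos.2 hk
  have h := Measure.addHaar_ball_mul_of_pos μ x hk' (R / k)
  rwa [mul_div_cancel₀ R hk'.ne', ENNReal.ofReal_pow hk'.le, ENNReal.ofReal_natCast] at h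

lemma exists_mem_ball_half_measure_slice_lt [FiniteDimensional ℝ E] {S : Set (E × E)}
    (hS : MeasurableSet S) {η : ℝ≥0∞}
    (h : (μ.prod μ) S < η * μ (ball 0 R) * μ (ball 0 R)) :
    ∃ x₀ ∈ ball (0 : E) (R / 2),
      μ (Prod.mk x₀ ⁻¹' S) < 8 ^ finrank ℝ E * η * μ (ball 0 (R / 4)) := by
  have h4 : μ (ball (0 : E) R) = 4 ^ finrank ℝ E * μ (ball 0 (R / 4)) := by
    exact_mod_cast addHaar_ball_eq_pow_mul_ball_div μ 0 R (k := 4) (by norm_num)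
  have h2 : μ (ball (0 : E) R) = 2 ^ finrank ℝ E * μ (ball 0 (R / 2)) := by
    exact_mod_cast addHaar_ball_eq_pow_mul_ball_div μ 0 R (k := 2) (by norm_num)
  refine exists_mem_lt_of_setLIntegral_lt (μ := μ) measurableSet_ball ?_
  calc ∫⁻ x in ball 0 (R / 2), μ (Prod.mk x ⁻¹' S) ∂μ
      ≤ ∫⁻ x, μ (Prod.mk x ⁻¹' S) ∂μ := setLIntegral_le_lintegral _ _
    _ = (μ.prod μ) S := (Measure.prod_apply hS).symm
    _ < η * μ (ball 0 R) * μ (ball 0 R) := h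
    _ = η * (4 ^ finrank ℝ E * μ (ball 0 (R / 4))) *
          (2 ^ finrank ℝ E * μ (ball 0 (R / 2))) := by
      nth_rw 1 [h4]; rw [h2]
    _ = 8 ^ finrank ℝ E * η * μ (ball 0 (R / 4)) * μ (ball 0 (R / 2)) := by
      rw [show (8 : ℝ≥0∞) = 4 * 2 by norm_num, mul_pow]; ring

lemma measure_ball_quarter_le_add_slices {x₀ x : E} (hx₀ : x₀ ∈ ball 0 (R / 2))
    (hx : x ∈ ball 0 R) (hfar : 2 * τ < dist (f x) (f x₀)) :
    μ (ball 0 (R / 4)) ≤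
      μ (Prod.mk x₀ ⁻¹' farPairs f R τ) + μ ((·, x) ⁻¹' farPairs f R τ) := by
  rw [← Measure.addHaar_ball_center μ (midpoint ℝ x₀ x)]
  refine (measure_mono fun z hz => ?_).trans (measure_union_le _ _)
  obtain ⟨hz, hzx₀, hxz⟩ := mem_ball_zero_of_mem_ball_midpoint hx₀ hx hz
  have hx₀' : x₀ ∈ ball (0 : E) R := ball_subset_ball (by linarith [pos_of_mem_ball hx]) hx₀
  by_contra hnot
  simp only [mem_union, mem_preimage, farPairs, mem_ofPred_eq, not_or, not_and, not_lt] at hnot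
  linarith [hnot.1 hx₀' hzx₀ hz, hnot.2 hz hxz hx, dist_triangle (f x) (f z) (f x₀)]

lemma measure_far_lt_of_measure_slice_lt [FiniteDimensional ℝ E] [MeasurableSpace X]
    [OpensMeasurableSpace X] [SecondCountableTopology X] (hf : Measurable f) {η : ℝ≥0∞}
    (hη : 2 * 8 ^ finrank ℝ E * η ≤ 1)
    (h : (μ.prod μ) (farPairs f R τ) < η * μ (ball 0 R) * μ (ball 0 R))
    {x₀ : E} (hx₀ : x₀ ∈ ball 0 (R / 2))
    (hslice : μ (Prod.mk x₀ ⁻¹' farPairs f R τ) < 8 ^ finrank ℝ E * η * μ (ball 0 (R / 4))) :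
    μ {x | x ∈ ball 0 R ∧ 2 * τ < dist (f x) (f x₀)} <
      2 * 8 ^ finrank ℝ E * η * μ (ball 0 R) := by
  set S := farPairs f R τ
  set v := μ (ball (0 : E) (R / 4))
  have hv0 : v ≠ 0 := (measure_ball_pos μ 0 (by linarith [pos_of_mem_ball hx₀])).ne'
  have hvtop : v ≠ ∞ := measure_ball_lt_top.ne
  have hS : MeasurableSet S := measurableSet_farPairs hf
  have hV : μ (ball (0 : E) R) = 4 ^ finrank ℝ E * v := by
    exact_mod_cast addHaar_ball_eq_pow_mul_ball_div μ 0 R (k := 4) (by norm_num)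
  have h2slice : 2 * μ (Prod.mk x₀ ⁻¹' S) ≤ v := by
    calc 2 * μ (Prod.mk x₀ ⁻¹' S) ≤ 2 * (8 ^ finrank ℝ E * η * v) := by gcongr
      _ = (2 * 8 ^ finrank ℝ E * η) * v := by ring
      _ ≤ v := mul_le_of_le_one_left' hη
  have hfar : ∀ x ∈ {x | x ∈ ball 0 R ∧ 2 * τ < dist (f x) (f x₀)},
      v ≤ 2 * μ ((·, x) ⁻¹' S) := by
    rintro x ⟨hx, hfx⟩
    have := measure_ball_quarter_le_add_slices μ hx₀ hx hfx
    refine (ENNReal.add_le_add_iff_left hvtop).1 ?_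
    calc v + v ≤ 2 * μ (Prod.mk x₀ ⁻¹' S) + 2 * μ ((·, x) ⁻¹' S) := by
          rw [← two_mul, ← mul_add]; gcongr
      _ ≤ v + 2 * μ ((·, x) ⁻¹' S) := by gcongr
  refine (ENNReal.mul_right_strictMono hv0 hvtop).lt_iff_lt.1 ?_
  calc v * μ {x | x ∈ ball 0 R ∧ 2 * τ < dist (f x) (f x₀)}
      ≤ v * μ {x | v ≤ 2 * μ ((·, x) ⁻¹' S)} := by gcongr; exact hfar _
    _ ≤ ∫⁻ x, 2 * μ ((·, x) ⁻¹' S) ∂μ :=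
        mul_meas_ge_le_lintegral₀ ((measurable_measure_prodMk_right hS).const_mul 2).aemeasurable v
    _ = 2 * (μ.prod μ) S := by
        rw [lintegral_const_mul _ (measurable_measure_prodMk_right hS), Measure.prod_apply_symm hS]
    _ < 2 * (η * μ (ball 0 R) * μ (ball 0 R)) := by gcongr; norm_num
    _ = v * (2 * 4 ^ finrank ℝ E * η * μ (ball 0 R)) := by nth_rw 1 [hV]; ring
    _ ≤ v * (2 * 8 ^ finrank ℝ E * η * μ (ball 0 R)) := by gcongr; norm_num

theorem exists_measure_far_lt [FiniteDimensional ℝ E] [MeasurableSpace X]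
    [OpensMeasurableSpace X] [SecondCountableTopology X] (hf : Measurable f) (hR : 0 < R)
    {η : ℝ≥0∞} (h : (μ.prod μ) {p | p.1 ∈ ball 0 R ∧ p.2 ∈ ball 0 R ∧ p.1 + p.2 ∈ ball 0 R ∧
      τ < dist (f (p.1 + p.2)) (f p.1)} < η * μ (ball 0 R) * μ (ball 0 R)) :
    ∃ x₀ ∈ ball (0 : E) R, μ {x | x ∈ ball 0 R ∧ 2 * τ < dist (f x) (f x₀)} <
      2 * 8 ^ finrank ℝ E * η * μ (ball 0 R) := by
  rw [← measure_farPairs] at h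
  obtain ⟨x₀, hx₀, hslice⟩ :=
    exists_mem_ball_half_measure_slice_lt μ (measurableSet_farPairs hf) h
  refine ⟨x₀, ball_subset_ball (by linarith) hx₀, ?_⟩
  rcases le_or_gt (2 * 8 ^ finrank ℝ E * η) 1 with hη | hη
  · exact measure_far_lt_of_measure_slice_lt μ hf hη h hx₀ hslice
  · calc μ {x | x ∈ ball 0 R ∧ 2 * τ < dist (f x) (f x₀)} ≤ 1 * μ (ball 0 R) := by
          rw [one_mul]; exact measure_mono fun x hx => hx.1
      _ < _ := ENNReal.mul_lt_mul_left (measure_ball_pos μ 0 hR).ne' measure_ball_lt_top.ne hη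

end ApproxInvariance

theorem approx_invariant_phase_is_constant_general (n : ℕ) :
    ∃ K : ℝ, 0 < K ∧
      ∀ R : ℝ, 0 < R →
        ∀ ψ : EuclideanSpace ℝ (Fin n) → ℝ, Measurable ψ →
          ∀ τ η : ℝ, 0 < τ → τ ≤ 1 → 0 < η → η ≤ 1 →
            volume {p : EuclideanSpace ℝ (Fin n) × EuclideanSpace ℝ (Fin n) |
                  p.1 ∈ Metric.ball 0 R ∧ p.2 ∈ Metric.ball 0 R ∧
                  p.1 + p.2 ∈ Metric.ball (0 : EuclideanSpace ℝ (Fin n)) R ∧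
                  τ < ‖Complex.exp (2 * π * I * ((ψ (p.1 + p.2) - ψ p.1 : ℝ) : ℂ)) - 1‖} <
                ENNReal.ofReal η *
                  volume {p : EuclideanSpace ℝ (Fin n) × EuclideanSpace ℝ (Fin n) |
                    p.1 ∈ Metric.ball 0 R ∧ p.2 ∈ Metric.ball 0 R ∧
                    p.1 + p.2 ∈ Metric.ball (0 : EuclideanSpace ℝ (Fin n)) R} →
            ∃ c : ℝ,
              volume {x | x ∈ Metric.ball (0 : EuclideanSpace ℝ (Fin n)) R ∧
                  K * τ < ‖Complex.exp (2 * π * I * ((ψ x : ℝ) : ℂ)) *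
                    Complex.exp (-(2 * π * I * (c : ℂ))) - 1‖} <
                ENNReal.ofReal (K * η) *
                  volume (Metric.ball (0 : EuclideanSpace ℝ (Fin n)) R) := by
  refine ⟨2 * 8 ^ n, by positivity, fun R hR ψ hψ τ η hτ _ hη _ h => ?_⟩
  set f := fun x => exp (2 * π * I * ψ x)
  have hf : Measurable f := by fun_prop
  have hpairs : volume {p : EuclideanSpace ℝ (Fin n) × EuclideanSpace ℝ (Fin n) |
      p.1 ∈ ball 0 R ∧ p.2 ∈ ball 0 R ∧ p.1 + p.2 ∈ ball 0 R} ≤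
        volume (ball (0 : EuclideanSpace ℝ (Fin n)) R) *
          volume (ball (0 : EuclideanSpace ℝ (Fin n)) R) := by
    rw [Measure.volume_eq_prod, ← Measure.prod_prod]
    exact measure_mono fun p hp => ⟨hp.1, hp.2.1⟩
  simp_rw [← dist_exp_two_pi_I_mul] at h
  obtain ⟨x₀, -, hx₀⟩ := exists_measure_far_lt volume hf hR
    (h.trans_le (by rw [mul_assoc]; gcongr))
  have hτK : 2 * τ ≤ 2 * 8 ^ n * τ := by
    have := one_le_pow₀ (n := n) (by norm_num : (1 : ℝ) ≤ 8)
    nlinarith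
  refine ⟨ψ x₀, (measure_mono ?_).trans_lt (hx₀.trans_eq ?_)⟩
  · rintro x ⟨hx, hfar⟩
    rw [norm_exp_two_pi_I_mul_exp_neg_sub_one] at hfar
    exact ⟨hx, by linarith⟩
  · rw [finrank_euclideanSpace_fin, ENNReal.ofReal_mul (by positivity),
      ENNReal.ofReal_mul (by positivity), ENNReal.ofReal_pow (by norm_num)]
    norm_num

/-- There is a constant `K > 0` depending only on `n` such that: if `B` is
a centered ball in `ℝⁿ`, `ψ : B → ℝ/ℤ` is measurable, `τ, η > 0` are small, and
`|e^{2πi(ψ(x+h₁)−ψ(x))} − 1| ≤ τ` for all `(x,h₁) ∈ B²` with `x+h₁ ∈ B` outside a set of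
relative measure `η`, then there is a constant phase `c` with
`|e^{2πiψ(x)}e^{−2πic} − 1| ≤ Kτ` for all `x ∈ B` outside a set of measure `Kη λ(B)`. -/
theorem approx_invariant_phase_is_constant (n : ℕ) (hn : 1 ≤ n) :
    ∃ K : ℝ, 0 < K ∧
      ∀ R : ℝ, 0 < R →
        ∀ ψ : EuclideanSpace ℝ (Fin n) → ℝ, Measurable ψ →
          ∀ τ η : ℝ, 0 < τ → τ ≤ 1 → 0 < η → η ≤ 1 →
            volume {p : EuclideanSpace ℝ (Fin n) × EuclideanSpace ℝ (Fin n) |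
                  p.1 ∈ Metric.ball 0 R ∧ p.2 ∈ Metric.ball 0 R ∧
                  p.1 + p.2 ∈ Metric.ball (0 : EuclideanSpace ℝ (Fin n)) R ∧
                  τ < ‖Complex.exp (2 * π * I * ((ψ (p.1 + p.2) - ψ p.1 : ℝ) : ℂ)) - 1‖} <
                ENNReal.ofReal η *
                  volume {p : EuclideanSpace ℝ (Fin n) × EuclideanSpace ℝ (Fin n) |
                    p.1 ∈ Metric.ball 0 R ∧ p.2 ∈ Metric.ball 0 R ∧
                    p.1 + p.2 ∈ Metric.ball (0 : EuclideanSpace ℝ (Fin n)) R} →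
            ∃ c : ℝ,
              volume {x | x ∈ Metric.ball (0 : EuclideanSpace ℝ (Fin n)) R ∧
                  K * τ < ‖Complex.exp (2 * π * I * ((ψ x : ℝ) : ℂ)) *
                    Complex.exp (-(2 * π * I * (c : ℂ))) - 1‖} <
                ENNReal.ofReal (K * η) *
                  volume (Metric.ball (0 : EuclideanSpace ℝ (Fin n)) R) :=
  approx_invariant_phase_is_constant_general n
end
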